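/- arXiv:2007.06523 — 4 statements merged into one kernel-verified Lean document; each statement's English description precedes it below -/
import Mathlib

section
/- Let z₀ ∈ ℂ, λ > 0, and let g : ℂ → ℂ be smooth with compact support and vanishing on an open neighbourhood of z₀. Write φ(z) := exp(2iλ Re((z − z₀)²)) and let h : ℂ → ℂ be the smooth compactly supported function equal to g(z)/(z̄ − z̄₀) for z ≠ z₀ and equal to 0 near z₀. Then for every z ∈ ℂ one has the identity 2iλ · R̄(φ g)(z) = φ(z) h(z) − R̄( φ · ∂_{z̄} h )(z). -/
open MeasureTheory Complex
open scoped ENNReal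

/-- Cauchy transform over all of `ℂ`:
`R̄f(z) = -(1/π) ∫_ℂ f(ζ)/(ζ - z) dA(ζ)`. -/
noncomputable def cauchyTAll (f : ℂ → ℂ) (z : ℂ) : ℂ :=
  (-(1 / Real.pi) : ℝ) • ∫ ζ, f ζ / (ζ - z)

/-- The Cauchy-Riemann operator `∂_z̄ = (1/2)(∂ₓ + i ∂ᵧ)`. -/
noncomputable def dbar (f : ℂ → ℂ) (z : ℂ) : ℂ :=
  (1 / 2 : ℂ) * (fderiv ℝ f z 1 + Complex.I * fderiv ℝ f z Complex.I)

namespace CTAux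

open Set Real Filter

/-- Integrability, on a measurable set, of a continuous function vanishing off a compact set. -/
lemma integrableOn_of_vanish {X : Type*} [MeasurableSpace X] [TopologicalSpace X]
    [OpensMeasurableSpace X] [T2Space X] {μ : Measure X} [IsFiniteMeasureOnCompacts μ]
    {f : X → ℂ} (hf : Continuous f) {s T : Set X} (hT : IsCompact T) (hs : MeasurableSet s)
    (h0 : ∀ p ∈ s \ T, f p = 0) : IntegrableOn f s μ := by
  have hdecomp : s = (s ∩ T) ∪ (s \ T) := (Set.inter_union_diff s T).symm
  rw [hdecomp]
  refine IntegrableOn.union ?_ ?_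
  · exact (hf.continuousOn.integrableOn_compact hT).mono_set Set.inter_subset_right
  · exact (integrableOn_congr_fun h0 (hs.diff hT.measurableSet)).mpr (integrableOn_zero)

lemma key_alg (u : ℂ →L[ℝ] ℂ) (θ : ℝ) :
    u (Complex.exp (θ * Complex.I)) + Complex.I * u (Complex.I * Complex.exp (θ * Complex.I))
      = Complex.exp (-(θ * Complex.I)) * (u 1 + Complex.I * u Complex.I) := by
  have h1 : (Complex.exp (θ * Complex.I))
      = (Real.cos θ) • (1 : ℂ) + (Real.sin θ) • (Complex.I) := by
    rw [Complex.exp_mul_I, ← Complex.ofReal_cos, ← Complex.ofReal_sin]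
    simp [Complex.real_smul]
  have h2 : Complex.I * Complex.exp (θ * Complex.I)
      = (-(Real.sin θ)) • (1 : ℂ) + (Real.cos θ) • (Complex.I) := by
    rw [h1]
    simp only [Complex.real_smul, mul_one, Complex.ofReal_neg]
    linear_combination (Real.sin θ : ℂ) * Complex.I_sq
  have h3 : Complex.exp (-(θ * Complex.I))
      = (Real.cos θ : ℂ) - (Real.sin θ : ℂ) * Complex.I := by
    rw [show -((θ : ℂ) * Complex.I) = ((-θ : ℝ) : ℂ) * Complex.I by push_cast; ring,
      Complex.exp_mul_I, ← Complex.ofReal_cos, ← Complex.ofReal_sin]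
    simp [sub_eq_add_neg]
  rw [h2, h1, h3, map_add, map_add, u.map_smul, u.map_smul, u.map_smul, u.map_smul]
  simp only [Complex.real_smul]
  push_cast
  linear_combination (Complex.sin (θ : ℂ)) * (u Complex.I) * Complex.I_sq

lemma polar_symm_exp (p : ℝ × ℝ) :
    Complex.polarCoord.symm p = (p.1 : ℂ) * Complex.exp (p.2 * Complex.I) := by
  rw [Complex.polarCoord_symm_apply, Complex.exp_mul_I, ← Complex.ofReal_cos,
    ← Complex.ofReal_sin]

/-- Integrability via polar coordinates, real version. -/
lemma integrable_comp_polar_real {f : ℝ × ℝ → ℂ}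
    (hint : IntegrableOn (fun p => p.1 • f (polarCoord.symm p)) polarCoord.target) :
    Integrable f := by
  set B : ℝ × ℝ → ℝ × ℝ →L[ℝ] ℝ × ℝ := fun p =>
    LinearMap.toContinuousLinearMap (Matrix.toLin (Module.Basis.finTwoProd ℝ) (Module.Basis.finTwoProd ℝ)
      !![Real.cos p.2, -p.1 * Real.sin p.2; Real.sin p.2, p.1 * Real.cos p.2]) with hB
  have B_det : ∀ p, (B p).det = p.1 := by
    intro p
    conv_rhs => rw [← one_mul p.1, ← Real.cos_sq_add_sin_sq p.2]
    simp only [hB, neg_mul, LinearMap.det_toContinuousLinearMap, LinearMap.det_toLin,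
      Matrix.det_fin_two_of, sub_neg_eq_add]
    ring
  have hBd : ∀ p ∈ polarCoord.target, HasFDerivWithinAt polarCoord.symm (B p)
      polarCoord.target p := fun p _ => (hasFDerivAt_polarCoord_symm p).hasFDerivWithinAt
  have himg : IntegrableOn f (polarCoord.symm '' polarCoord.target) := by
    rw [integrableOn_image_iff_integrableOn_abs_det_fderiv_smul volume
      polarCoord.open_target.measurableSet hBd polarCoord.symm.injOn f]
    refine hint.congr_fun ?_ polarCoord.open_target.measurableSet
    intro p hp
    show p.1 • f (polarCoord.symm p) = |(B p).det| • f (polarCoord.symm p)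
    rw [B_det, abs_of_pos hp.1]
  rw [polarCoord.symm_image_target_eq_source] at himg
  have hres : volume.restrict polarCoord.source = volume := by
    rw [Measure.restrict_congr_set polarCoord_source_ae_eq_univ, Measure.restrict_univ]
  rw [IntegrableOn, hres] at himg
  exact himg

/-- Integrability via polar coordinates, complex version. -/
lemma integrable_comp_polar {f : ℂ → ℂ}
    (hint : IntegrableOn (fun p : ℝ × ℝ => p.1 • f (Complex.polarCoord.symm p))
      polarCoord.target) :
    Integrable f := by
  rw [← (Complex.volume_preserving_equiv_real_prod.symm).integrable_comp_emb
      Complex.measurableEquivRealProd.symm.measurableEmbedding]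
  exact integrable_comp_polar_real hint

/-- `f w / (w - z)` is integrable for `f` continuous with compact support. -/
lemma integrable_div_sub {f : ℂ → ℂ} (hf : Continuous f) (hfc : HasCompactSupport f) (z : ℂ) :
    Integrable (fun w => f w / (w - z)) := by
  obtain ⟨R, hR⟩ := hfc.isBounded.subset_closedBall 0
  have key : Integrable (fun w => f (z + w) / w) := by
    apply integrable_comp_polar
    set A : ℝ × ℝ → ℂ := fun p =>
      f (z + p.1 * Complex.exp (p.2 * Complex.I)) * Complex.exp (-(p.2 * Complex.I)) with hA
    have hAc : Continuous A := by
      apply Continuous.mul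
      · exact hf.comp (by fun_prop)
      · fun_prop
    have hvan : ∀ p ∈ polarCoord.target \
        (Icc 0 (R + ‖z‖) ×ˢ Icc (-Real.pi) Real.pi), A p = 0 := by
      rintro ⟨r, θ⟩ ⟨⟨hr, hθ⟩, hout⟩
      simp only [Set.mem_Ioi] at hr
      have hrR : R + ‖z‖ < r := by
        by_contra hcon
        push_neg at hcon
        exact hout ⟨⟨le_of_lt hr, hcon⟩, Set.mem_Icc.mpr ⟨le_of_lt hθ.1, le_of_lt hθ.2⟩⟩
      have hfar : z + (r : ℂ) * Complex.exp (θ * Complex.I) ∉ Metric.closedBall (0 : ℂ) R := by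
        simp only [Metric.mem_closedBall, dist_zero_right, not_le]
        have h1 : ‖(r : ℂ) * Complex.exp (θ * Complex.I)‖ = r := by
          rw [norm_mul, Complex.norm_exp_ofReal_mul_I,
            mul_one, Complex.norm_real, Real.norm_eq_abs, abs_of_pos hr]
        have h2 := norm_sub_norm_le ((r : ℂ) * Complex.exp (θ * Complex.I)) (-z)
        rw [h1, norm_neg, sub_neg_eq_add] at h2
        have : ‖z‖ = ‖z‖ := rfl
        calc R < r - ‖z‖ := by rw [← this]; linarith
        _ ≤ ‖(r : ℂ) * Complex.exp (θ * Complex.I) + z‖ := h2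
        _ = ‖z + (r : ℂ) * Complex.exp (θ * Complex.I)‖ := by rw [add_comm]
      have : f (z + (r : ℂ) * Complex.exp (θ * Complex.I)) = 0 :=
        image_eq_zero_of_notMem_tsupport (fun hmem => hfar (hR hmem))
      simp [hA, this]
    have hint : IntegrableOn A polarCoord.target :=
      integrableOn_of_vanish hAc (isCompact_Icc.prod isCompact_Icc)
        polarCoord.open_target.measurableSet hvan
    have heq : Set.EqOn A (fun p : ℝ × ℝ =>
        p.1 • (f (z + Complex.polarCoord.symm p) / Complex.polarCoord.symm p))
        polarCoord.target := by
      intro p hp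
      show A p = p.1 • (f (z + Complex.polarCoord.symm p) / Complex.polarCoord.symm p)
      rw [CTAux.polar_symm_exp]
      have he : Complex.exp ((p.2 : ℂ) * Complex.I) ≠ 0 := Complex.exp_ne_zero _
      have hr : (p.1 : ℂ) ≠ 0 := by
        simp only [ne_eq, Complex.ofReal_eq_zero]
        exact ne_of_gt hp.1
      rw [hA]
      simp only [Complex.real_smul, Complex.exp_neg]
      field_simp
    exact hint.congr_fun heq polarCoord.open_target.measurableSet
  have h2 := key.comp_add_left (-z)
  refine h2.congr (Filter.EventuallyEq.of_eq ?_)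
  funext t
  have ht : z + (-z + t) = t := by ring
  rw [ht, neg_add_eq_sub]


lemma fderiv_off_tsupport {F : ℂ → ℂ} {w : ℂ} (hw : w ∉ tsupport F) : fderiv ℝ F w = 0 := by
  have hev : F =ᶠ[nhds w] 0 := notMem_tsupport_iff_eventuallyEq.mp hw
  rw [hev.fderiv_eq]
  exact fderiv_const_apply 0

lemma cont_dbar {f : ℂ → ℂ} (hf : ContDiff ℝ (⊤ : ℕ∞) f) : Continuous (dbar f) := by
  have h1 : Continuous (fderiv ℝ f) := hf.continuous_fderiv (by simp)
  have h2 : Continuous fun w => fderiv ℝ f w (1 : ℂ) :=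
    Continuous.clm_apply (𝕜 := ℝ) (E := ℂ) (F := ℂ) h1 continuous_const
  have h3 : Continuous fun w => fderiv ℝ f w Complex.I :=
    Continuous.clm_apply (𝕜 := ℝ) (E := ℂ) (F := ℂ) h1 continuous_const
  exact continuous_const.mul (h2.add (continuous_const.mul h3))

lemma hcs_dbar {f : ℂ → ℂ} (hfc : HasCompactSupport f) : HasCompactSupport (dbar f) := by
  have h1 : HasCompactSupport (fderiv ℝ f) := HasCompactSupport.fderiv (𝕜 := ℝ) hfc
  have hcomp : dbar f = (fun L : ℂ →L[ℝ] ℂ =>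
      (1 / 2 : ℂ) * (L 1 + Complex.I * L Complex.I)) ∘ (fderiv ℝ f) := rfl
  rw [hcomp]
  exact h1.comp_left (by simp)

lemma pompeiu {F : ℂ → ℂ} (hF : ContDiff ℝ (⊤ : ℕ∞) F) (hFc : HasCompactSupport F) (z : ℂ) :
    cauchyTAll (dbar F) z = F z := by
  obtain ⟨R, hR⟩ := hFc.isBounded.subset_closedBall 0
  set u : ℂ → ℂ →L[ℝ] ℂ := fderiv ℝ F with hu
  have hud : ∀ w, HasFDerivAt F (u w) w := fun w => (hF.differentiable (by simp) w).hasFDerivAt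
  have hu_cont : Continuous u := hF.continuous_fderiv (by simp)
  have hfar : ∀ r θ : ℝ, R + ‖z‖ < r →
      z + (r : ℂ) * Complex.exp (θ * Complex.I) ∉ Metric.closedBall (0 : ℂ) R := by
    intro r θ hrR
    simp only [Metric.mem_closedBall, dist_zero_right, not_le]
    have h1 : ‖(r : ℂ) * Complex.exp (θ * Complex.I)‖ = |r| := by
      rw [norm_mul, Complex.norm_exp_ofReal_mul_I,
        mul_one, Complex.norm_real, Real.norm_eq_abs]
    have h2 := norm_sub_norm_le ((r : ℂ) * Complex.exp (θ * Complex.I)) (-z)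
    rw [h1, norm_neg, sub_neg_eq_add] at h2
    have habs : r ≤ |r| := le_abs_self r
    calc R < r - ‖z‖ := by linarith
    _ ≤ |r| - ‖z‖ := by linarith
    _ ≤ ‖(r : ℂ) * Complex.exp (θ * Complex.I) + z‖ := h2
    _ = ‖z + (r : ℂ) * Complex.exp (θ * Complex.I)‖ := by rw [add_comm]
  have hu0 : ∀ w : ℂ, w ∉ Metric.closedBall (0 : ℂ) R → u w = 0 := by
    intro w hw
    exact fderiv_off_tsupport (fun hmem => hw (hR hmem))
  have hF0 : ∀ w : ℂ, w ∉ Metric.closedBall (0 : ℂ) R → F w = 0 := by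
    intro w hw
    exact image_eq_zero_of_notMem_tsupport (fun hmem => hw (hR hmem))
  set S : Set (ℝ × ℝ) := Set.Ioi (0 : ℝ) ×ˢ Set.Ioo (-Real.pi) Real.pi with hS
  have hSm : MeasurableSet S := measurableSet_Ioi.prod measurableSet_Ioo
  have hTc : IsCompact (Set.Icc (0 : ℝ) (R + ‖z‖) ×ˢ Set.Icc (-Real.pi) Real.pi) :=
    isCompact_Icc.prod isCompact_Icc
  set A : ℝ × ℝ → ℂ := fun p =>
    u (z + p.1 * Complex.exp (p.2 * Complex.I)) (Complex.exp (p.2 * Complex.I)) with hA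
  set Bf : ℝ × ℝ → ℂ := fun p => Complex.I *
    u (z + p.1 * Complex.exp (p.2 * Complex.I)) (Complex.I * Complex.exp (p.2 * Complex.I)) with hBf
  have hAc : Continuous A := (hu_cont.comp (by fun_prop)).clm_apply (by fun_prop)
  have hBc : Continuous Bf :=
    continuous_const.mul ((hu_cont.comp (by fun_prop)).clm_apply (by fun_prop))
  have hrbig : ∀ p : ℝ × ℝ, p ∈ S \ (Set.Icc (0 : ℝ) (R + ‖z‖) ×ˢ Set.Icc (-Real.pi) Real.pi) →
      R + ‖z‖ < p.1 := by
    rintro ⟨r, θ⟩ ⟨⟨hr, hθ⟩, hout⟩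
    by_contra hcon
    push_neg at hcon
    exact hout ⟨⟨le_of_lt hr, hcon⟩, ⟨le_of_lt hθ.1, le_of_lt hθ.2⟩⟩
  have hvanA : ∀ p ∈ S \ (Set.Icc (0 : ℝ) (R + ‖z‖) ×ˢ Set.Icc (-Real.pi) Real.pi), A p = 0 := by
    intro p hp
    simp [hA, hu0 _ (hfar p.1 p.2 (hrbig p hp))]
  have hvanB : ∀ p ∈ S \ (Set.Icc (0 : ℝ) (R + ‖z‖) ×ˢ Set.Icc (-Real.pi) Real.pi), Bf p = 0 := by
    intro p hp
    simp [hBf, hu0 _ (hfar p.1 p.2 (hrbig p hp))]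
  have hAint : IntegrableOn A S := integrableOn_of_vanish hAc hTc hSm hvanA
  have hBint : IntegrableOn Bf S := integrableOn_of_vanish hBc hTc hSm hvanB
  have hdbar : ∀ w, dbar F w = (1 / 2 : ℂ) * (u w 1 + Complex.I * u w Complex.I) := fun w => rfl
  have t1 : (∫ ζ, dbar F ζ / (ζ - z)) = ∫ w, dbar F (z + w) / w := by
    rw [← MeasureTheory.integral_add_left_eq_self (fun ζ => dbar F ζ / (ζ - z)) z]
    simp only [add_sub_cancel_left]
  have t2 : (∫ w, dbar F (z + w) / w) = ∫ p in polarCoord.target,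
      p.1 • (dbar F (z + Complex.polarCoord.symm p) / Complex.polarCoord.symm p) :=
    (Complex.integral_comp_polarCoord_symm _).symm
  have t3 : (∫ p in polarCoord.target,
      p.1 • (dbar F (z + Complex.polarCoord.symm p) / Complex.polarCoord.symm p))
      = ∫ p in S, (1 / 2 : ℂ) * (A p + Bf p) := by
    rw [polarCoord_target, ← hS]
    apply MeasureTheory.setIntegral_congr_fun hSm
    intro p hp
    show p.1 • (dbar F (z + Complex.polarCoord.symm p) / Complex.polarCoord.symm p)
      = (1 / 2 : ℂ) * (A p + Bf p)
    rw [polar_symm_exp, hdbar]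
    have he : Complex.exp ((p.2 : ℂ) * Complex.I) ≠ 0 := Complex.exp_ne_zero _
    have hr0 : (p.1 : ℂ) ≠ 0 := by
      simp only [ne_eq, Complex.ofReal_eq_zero]
      exact ne_of_gt hp.1
    have hAB : A p + Bf p = Complex.exp (-((p.2 : ℂ) * Complex.I)) *
        (u (z + p.1 * Complex.exp (p.2 * Complex.I)) 1 +
          Complex.I * u (z + p.1 * Complex.exp (p.2 * Complex.I)) Complex.I) :=
      key_alg (u (z + p.1 * Complex.exp (p.2 * Complex.I))) p.2
    rw [hAB, Complex.real_smul, Complex.exp_neg]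
    field_simp
  have innerB : ∀ r ∈ Set.Ioi (0 : ℝ),
      (∫ θ in Set.Ioo (-Real.pi) Real.pi, Bf (r, θ)) = 0 := by
    intro r hr
    have hr0 : (0 : ℝ) < r := hr
    have hd : ∀ θ : ℝ, HasDerivAt (fun θ : ℝ => F (z + (r : ℂ) * Complex.exp (θ * Complex.I)))
        (u (z + (r : ℂ) * Complex.exp (θ * Complex.I))
          ((r : ℂ) * (Complex.exp (θ * Complex.I) * Complex.I))) θ := by
      intro θ
      have h0 : HasDerivAt (fun θ : ℝ => (θ : ℂ)) 1 θ := Complex.ofRealCLM.hasDerivAt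
      have h1 : HasDerivAt (fun θ : ℝ => (θ : ℂ) * Complex.I) Complex.I θ := by
        simpa using h0.mul_const Complex.I
      have h3 := ((h1.cexp.const_mul ((r : ℂ))).const_add z)
      exact (hud _).comp_hasDerivAt θ h3
    have hBd : ∀ θ : ℝ, Bf (r, θ) = (r⁻¹ : ℝ) • (Complex.I *
        (u (z + (r : ℂ) * Complex.exp (θ * Complex.I))
          ((r : ℂ) * (Complex.exp (θ * Complex.I) * Complex.I)))) := by
      intro θ
      have harg : ((r : ℂ) * (Complex.exp (θ * Complex.I) * Complex.I))
          = r • (Complex.I * Complex.exp (θ * Complex.I)) := by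
        rw [Complex.real_smul]; ring
      rw [harg, ContinuousLinearMap.map_smul, mul_smul_comm, smul_smul,
        inv_mul_cancel₀ (ne_of_gt hr0), one_smul]
    have hcont : Continuous (fun θ : ℝ => u (z + (r : ℂ) * Complex.exp (θ * Complex.I))
        ((r : ℂ) * (Complex.exp (θ * Complex.I) * Complex.I))) :=
      (hu_cont.comp (by fun_prop)).clm_apply (by fun_prop)
    have hle : -Real.pi ≤ Real.pi := by linarith [Real.pi_pos]
    have hftc := intervalIntegral.integral_eq_sub_of_hasDerivAt
      (f := fun θ : ℝ => F (z + (r : ℂ) * Complex.exp (θ * Complex.I)))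
      (f' := fun θ : ℝ => u (z + (r : ℂ) * Complex.exp (θ * Complex.I))
        ((r : ℂ) * (Complex.exp (θ * Complex.I) * Complex.I)))
      (a := -Real.pi) (b := Real.pi)
      (fun θ _ => hd θ) (hcont.intervalIntegrable (-Real.pi) Real.pi)
    simp_rw [hBd]
    rw [integral_smul, MeasureTheory.integral_const_mul,
      ← MeasureTheory.integral_Ioc_eq_integral_Ioo, ← intervalIntegral.integral_of_le hle, hftc]
    have hpi : Complex.exp ((Real.pi : ℂ) * Complex.I) = -1 := Complex.exp_pi_mul_I
    have hpi2 : Complex.exp (-((Real.pi : ℂ) * Complex.I)) = -1 := by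
      rw [Complex.exp_neg, Complex.exp_pi_mul_I]
      norm_num
    simp [hpi, hpi2]
  have tB : (∫ p in S, Bf p) = 0 := by
    have hBint' : IntegrableOn Bf (Set.Ioi (0 : ℝ) ×ˢ Set.Ioo (-Real.pi) Real.pi)
        (volume.prod volume) := by
      rw [← Measure.volume_eq_prod, ← hS]
      exact hBint
    rw [hS, Measure.volume_eq_prod, MeasureTheory.setIntegral_prod _ hBint']
    rw [MeasureTheory.setIntegral_congr_fun measurableSet_Ioi
      (fun r hr => innerB r hr : Set.EqOn _ (fun _ => (0 : ℂ)) _)]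
    simp
  have hinner : ∀ θ ∈ Set.Ioo (-Real.pi) Real.pi,
      (∫ r in Set.Ioi (0 : ℝ), A (r, θ)) = -F z := by
    intro θ _
    have hdm : ∀ r : ℝ, HasDerivAt (fun r : ℝ => F (z + (r : ℂ) * Complex.exp (θ * Complex.I)))
        (A (r, θ)) r := by
      intro r
      have h0 : HasDerivAt (fun r : ℝ => (r : ℂ)) 1 r := Complex.ofRealCLM.hasDerivAt
      have h1 : HasDerivAt (fun r : ℝ => z + (r : ℂ) * Complex.exp (θ * Complex.I))
          (Complex.exp (θ * Complex.I)) r := by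
        simpa using (h0.mul_const (Complex.exp (θ * Complex.I))).const_add z
      exact (hud _).comp_hasDerivAt r h1
    have hcontr : Continuous (fun r : ℝ => A (r, θ)) := hAc.comp (by fun_prop)
    have hvan : ∀ r ∈ Set.Ioi (0 : ℝ) \ Set.Icc (0 : ℝ) (R + ‖z‖), A (r, θ) = 0 := by
      rintro r ⟨hr, hout⟩
      have hrR : R + ‖z‖ < r := by
        by_contra hcon
        push_neg at hcon
        exact hout ⟨le_of_lt hr, hcon⟩
      simp [hA, hu0 _ (hfar r θ hrR)]
    have hintr : IntegrableOn (fun r : ℝ => A (r, θ)) (Set.Ioi 0) :=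
      integrableOn_of_vanish hcontr isCompact_Icc measurableSet_Ioi hvan
    have htend : Filter.Tendsto (fun r : ℝ => F (z + (r : ℂ) * Complex.exp (θ * Complex.I)))
        Filter.atTop (nhds 0) := by
      apply Filter.Tendsto.congr' ?_ tendsto_const_nhds
      filter_upwards [Filter.eventually_gt_atTop (R + ‖z‖)] with r hr
      exact (hF0 _ (hfar r θ hr)).symm
    have hcontF : Continuous (fun r : ℝ => F (z + (r : ℂ) * Complex.exp (θ * Complex.I))) :=
      hF.continuous.comp (by fun_prop)
    have hkey := MeasureTheory.integral_Ioi_of_hasDerivAt_of_tendsto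
      (f := fun r : ℝ => F (z + (r : ℂ) * Complex.exp (θ * Complex.I)))
      (f' := fun r : ℝ => A (r, θ)) (a := 0)
      hcontF.continuousWithinAt (fun x _ => hdm x) hintr htend
    rw [hkey]
    simp
  have hA' : Integrable A ((volume.restrict (Set.Ioi (0 : ℝ))).prod
      (volume.restrict (Set.Ioo (-Real.pi) Real.pi))) := by
    rw [Measure.prod_restrict, ← Measure.volume_eq_prod]
    exact hAint
  have tA : (∫ p in S, A p) = (2 * Real.pi) • (-F z) := by
    rw [hS, Measure.volume_eq_prod, ← Measure.prod_restrict,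
      MeasureTheory.integral_prod_symm _ hA']
    rw [MeasureTheory.setIntegral_congr_fun measurableSet_Ioo
      (fun θ hθ => hinner θ hθ : Set.EqOn _ (fun _ => -F z) _)]
    rw [MeasureTheory.setIntegral_const, measureReal_def, Real.volume_Ioo,
      ENNReal.toReal_ofReal (by linarith [Real.pi_pos])]
    norm_num
    left
    ring
  have hsplit : (∫ p in S, (1 / 2 : ℂ) * (A p + Bf p))
      = (1 / 2 : ℂ) * ((∫ p in S, A p) + (∫ p in S, Bf p)) := by
    rw [MeasureTheory.integral_const_mul, MeasureTheory.integral_add hAint hBint]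
  unfold cauchyTAll
  rw [t1, t2, t3, hsplit, tA, tB]
  simp only [add_zero, Complex.real_smul, smul_neg]
  have hpine : (Real.pi : ℂ) ≠ 0 := Complex.ofReal_ne_zero.mpr Real.pi_ne_zero
  push_cast
  field_simp


lemma dbar_mul {f g : ℂ → ℂ} {z : ℂ} (hf : DifferentiableAt ℝ f z)
    (hg : DifferentiableAt ℝ g z) :
    dbar (fun w => f w * g w) z = dbar f z * g z + f z * dbar g z := by
  unfold dbar
  rw [fderiv_fun_mul hf hg]
  simp only [ContinuousLinearMap.add_apply, ContinuousLinearMap.coe_smul', Pi.smul_apply,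
    smul_eq_mul]
  ring

lemma dbar_phi (z₀ : ℂ) (lam : ℝ) (w : ℂ) :
    dbar (fun z => Complex.exp (2 * Complex.I * (lam : ℂ) * (((z - z₀) ^ 2).re : ℂ))) w
      = 2 * Complex.I * (lam : ℂ) * ((starRingEnd ℂ) w - (starRingEnd ℂ) z₀) *
        Complex.exp (2 * Complex.I * (lam : ℂ) * (((w - z₀) ^ 2).re : ℂ)) := by
  set c : ℂ := 2 * Complex.I * (lam : ℂ) with hc
  have hsq : HasFDerivAt (fun z : ℂ => (z - z₀) ^ 2)
      ((ContinuousLinearMap.smulRight (1 : ℂ →L[ℂ] ℂ) (2 * (w - z₀))).restrictScalars ℝ) w := by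
    have hd : HasDerivAt (fun z : ℂ => (z - z₀) ^ 2) (2 * (w - z₀)) w := by
      simpa using ((hasDerivAt_id w).sub_const z₀).fun_pow 2
    exact hd.hasFDerivAt.restrictScalars ℝ
  have hq : HasFDerivAt (fun z : ℂ => c * ((((z - z₀) ^ 2).re : ℝ) : ℂ))
      (c • (Complex.ofRealCLM.comp (Complex.reCLM.comp
        ((ContinuousLinearMap.smulRight (1 : ℂ →L[ℂ] ℂ) (2 * (w - z₀))).restrictScalars ℝ)))) w :=
    ((Complex.ofRealCLM.hasFDerivAt).comp w
      ((Complex.reCLM.hasFDerivAt).comp w hsq)).const_mul c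
  have hphi := hq.cexp
  have hfd := hphi.fderiv
  unfold dbar
  rw [hfd]
  simp only [ContinuousLinearMap.coe_smul', Pi.smul_apply, ContinuousLinearMap.coe_comp',
    Function.comp_apply, ContinuousLinearMap.coe_restrictScalars',
    ContinuousLinearMap.smulRight_apply, ContinuousLinearMap.one_apply, smul_eq_mul,
    Complex.ofRealCLM_apply, Complex.reCLM_apply, one_mul]
  have hconj : (starRingEnd ℂ) w - (starRingEnd ℂ) z₀
      = (((w - z₀).re : ℝ) : ℂ) - ((w - z₀).im : ℝ) * Complex.I := by
    rw [← map_sub]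
    apply Complex.ext <;> simp <;> ring
  rw [hconj]
  have h1 : (Complex.I * (2 * (w - z₀))).re = -(2 * ((w - z₀).im)) := by
    simp [Complex.mul_re]
  have h2 : (2 * (w - z₀)).re = 2 * (w - z₀).re := by
    simp [Complex.mul_re]
  rw [h1, h2]
  push_cast
  ring

end CTAux

theorem stmt_4 (z₀ : ℂ) (lam : ℝ) (hlam : 0 < lam) (g : ℂ → ℂ)
    (hg : ContDiff ℝ (⊤ : ℕ∞) g) (hgc : HasCompactSupport g)
    (hg0 : ∀ᶠ z in nhds z₀, g z = 0)
    (φ : ℂ → ℂ) (hφ : φ = fun z => Complex.exp (2 * Complex.I * (lam : ℂ) * (((z - z₀) ^ 2).re : ℂ)))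
    (h : ℂ → ℂ) (hh : ∀ z : ℂ, h z = g z / ((starRingEnd ℂ) z - (starRingEnd ℂ) z₀)) :
    ∀ z : ℂ,
      2 * Complex.I * (lam : ℂ) * cauchyTAll (fun w => φ w * g w) z
        = φ z * h z - cauchyTAll (fun w => φ w * dbar h w) z := by
  intro z
  have hφs : ContDiff ℝ (⊤ : ℕ∞) φ := by
    rw [hφ]
    apply (Complex.contDiff_exp (𝕜 := ℝ)).comp
    exact contDiff_const.mul (Complex.ofRealCLM.contDiff.comp
      (Complex.reCLM.contDiff.comp ((contDiff_id.sub contDiff_const).pow 2)))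
  have hgc0 : g z₀ = 0 := hg0.self_of_nhds
  have hconjCD : ContDiff ℝ (⊤ : ℕ∞) (fun x : ℂ => (starRingEnd ℂ) x) := Complex.conjCLE.contDiff
  have hhs : ContDiff ℝ (⊤ : ℕ∞) h := by
    rw [contDiff_iff_contDiffAt]
    intro w
    by_cases hw : w = z₀
    · subst hw
      have hev : h =ᶠ[nhds w] (fun _ => (0 : ℂ)) := by
        filter_upwards [hg0] with x hx
        rw [hh, hx, zero_div]
      exact (contDiffAt_const (c := (0 : ℂ))).congr_of_eventuallyEq hev
    · have heq : h = fun x => g x * ((starRingEnd ℂ) x - (starRingEnd ℂ) z₀)⁻¹ := by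
        funext x
        rw [hh, div_eq_mul_inv]
      rw [heq]
      refine hg.contDiffAt.mul (ContDiffAt.inv ?_ ?_)
      · exact (hconjCD.contDiffAt).sub contDiffAt_const
      · rw [sub_ne_zero]
        exact fun hcon => hw (by simpa using congrArg (starRingEnd ℂ) hcon)
  have hhc : HasCompactSupport h := by
    apply hgc.mono
    intro x hx
    simp only [Function.mem_support] at hx ⊢
    intro hgx
    exact hx (by rw [hh, hgx, zero_div])
  have hcd : Continuous (dbar h) := CTAux.cont_dbar hhs
  have hdc : HasCompactSupport (dbar h) := CTAux.hcs_dbar hhc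
  have hconj_h : ∀ w, ((starRingEnd ℂ) w - (starRingEnd ℂ) z₀) * h w = g w := by
    intro w
    by_cases hw : w = z₀
    · subst hw
      simp [hh w, hgc0]
    · have hne : (starRingEnd ℂ) w - (starRingEnd ℂ) z₀ ≠ 0 := by
        rw [sub_ne_zero]
        exact fun hcon => hw (by simpa using congrArg (starRingEnd ℂ) hcon)
      rw [hh]
      field_simp
  have hdF : ∀ w, dbar (fun x => φ x * h x) w
      = 2 * Complex.I * (lam : ℂ) * (φ w * g w) + φ w * dbar h w := by
    intro w
    rw [CTAux.dbar_mul ((hφs.differentiable (by simp)) w) ((hhs.differentiable (by simp)) w)]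
    have hdphi : dbar φ w = 2 * Complex.I * (lam : ℂ) *
        ((starRingEnd ℂ) w - (starRingEnd ℂ) z₀) * φ w := by
      rw [hφ]
      exact CTAux.dbar_phi z₀ lam w
    rw [hdphi]
    linear_combination (2 * Complex.I * (lam : ℂ) * φ w) * (hconj_h w)
  set F : ℂ → ℂ := fun x => φ x * h x with hF
  have hFs : ContDiff ℝ (⊤ : ℕ∞) F := hφs.mul hhs
  have hFc : HasCompactSupport F := hhc.mul_left
  have hpom := CTAux.pompeiu hFs hFc z
  have hFz : F z = φ z * h z := rfl
  rw [hFz] at hpom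
  have hint1 : Integrable (fun w => (φ w * g w) / (w - z)) :=
    CTAux.integrable_div_sub (hφs.continuous.mul hg.continuous) hgc.mul_left z
  have hint2 : Integrable (fun w => (φ w * dbar h w) / (w - z)) :=
    CTAux.integrable_div_sub (hφs.continuous.mul hcd) hdc.mul_left z
  have hsplit : (∫ ζ, dbar F ζ / (ζ - z))
      = 2 * Complex.I * (lam : ℂ) * (∫ ζ, (φ ζ * g ζ) / (ζ - z))
        + ∫ ζ, (φ ζ * dbar h ζ) / (ζ - z) := by
    rw [← MeasureTheory.integral_const_mul,
      ← MeasureTheory.integral_add (hint1.const_mul _) hint2]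
    apply integral_congr_ae
    apply Filter.EventuallyEq.of_eq
    funext ζ
    rw [hdF ζ]
    ring
  have hexp : cauchyTAll (dbar F) z
      = 2 * Complex.I * (lam : ℂ) * cauchyTAll (fun w => φ w * g w) z
        + cauchyTAll (fun w => φ w * dbar h w) z := by
    unfold cauchyTAll
    rw [hsplit]
    simp only [Complex.real_smul]
    push_cast
    ring
  rw [hexp] at hpom
  linear_combination hpom
end

section
/- Let Ω ⊂ ℂ be a bounded open set, let p ∈ (4/3, 2) and q ∈ (4, ∞) satisfy 1/2 + 1/q ≥ 1/p, and fix a smooth function χ : ℂ → [0,1] with χ(z) = 0 for |z| ≤ 1 and χ(z) = 1 for |z| ≥ 2. For λ > 0 and z₀ ∈ ℂ set χ_λ(z) := χ(λ^{1/2}(z − z₀)). Then there exists a constant C > 0, depending only on Ω, p, q, χ, such that for every λ ≥ 1, every z₀ ∈ ℂ, and every smooth compactly supported f : ℂ → ℂ with support contained in Ω, one has ‖R̄( e^{2iλ·Re((·−z₀)²)} (1 − χ_λ) f )‖_{L^q(Ω)} ≤ C · λ^{−(1−(1/p−1/q))} · ‖f‖_{W^{1,p}(Ω)}. -/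
open MeasureTheory Complex
open scoped ENNReal

/-- Cauchy transform over a set `Ω ⊂ ℂ`:
`R̄f(z) = -(1/π) ∫_Ω f(ζ)/(ζ - z) dA(ζ)`. -/
noncomputable def cauchyT (Ω : Set ℂ) (f : ℂ → ℂ) (z : ℂ) : ℂ :=
  (-(1 / Real.pi) : ℝ) • ∫ ζ in Ω, f ζ / (ζ - z)

/-- The `W^{1,p}(Ω)` norm: `‖f‖_{L^p(Ω)} + ‖∂ₓf‖_{L^p(Ω)} + ‖∂ᵧf‖_{L^p(Ω)}`. -/
noncomputable def W1pNorm (Ω : Set ℂ) (p : ℝ≥0∞) (f : ℂ → ℂ) : ℝ≥0∞ :=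
  eLpNorm f p (volume.restrict Ω)
    + eLpNorm (fun z => fderiv ℝ f z 1) p (volume.restrict Ω)
    + eLpNorm (fun z => fderiv ℝ f z Complex.I) p (volume.restrict Ω)

open Set Real
open scoped NNReal

lemma superlevel_subset {s t : ℝ} (hs : 0 < s) (ht : 0 < t) :
    {a : ℂ | t ≤ ‖a‖ ^ (-s)} ⊆ Metric.closedBall 0 (t ^ (-s⁻¹)) := by
  intro a ha
  simp only [mem_setOf_eq] at ha
  simp only [Metric.mem_closedBall, dist_zero_right]
  rcases eq_or_ne a 0 with rfl | h0
  · simp only [norm_zero]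
    positivity
  · have hna : 0 < ‖a‖ := norm_pos_iff.2 h0
    have := Real.rpow_le_rpow_of_nonpos ht ha (neg_nonpos.2 (inv_nonneg.2 hs.le))
    rwa [← Real.rpow_mul hna.le, mul_comm, neg_mul_neg, inv_mul_cancel₀ hs.ne',
      Real.rpow_one] at this

lemma vol_closedBall_rpow {c : ℝ} (hc : 0 ≤ c) :
    volume (Metric.closedBall (0:ℂ) c) = ENNReal.ofReal (Real.pi * c ^ (2:ℝ)) := by
  rw [Complex.volume_closedBall, ← ENNReal.ofReal_pow hc, ← Real.rpow_natCast c 2,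
    ← ENNReal.ofReal_coe_nnreal, NNReal.coe_real_pi, ← ENNReal.ofReal_mul (by positivity),
    mul_comm]
  norm_num

lemma lint_ball_rpow {s R : ℝ} (hs0 : 0 < s) (hs2 : s < 2) (hR : 0 < R) :
    ∫⁻ w : ℂ in Metric.ball 0 R, ENNReal.ofReal (‖w‖ ^ (-s)) ≤
      ENNReal.ofReal ((Real.pi + Real.pi * (s / (2 - s))) * R ^ (2 - s)) := by
  have hmeas : Measurable (fun a : ℂ => ‖a‖ ^ (-s)) := by fun_prop
  rw [lintegral_eq_lintegral_meas_le _ (Filter.Eventually.of_forall fun a => by positivity)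
    hmeas.aemeasurable]
  set T : ℝ := R ^ (-s) with hT
  have hTpos : 0 < T := Real.rpow_pos_of_pos hR _
  calc ∫⁻ t in Ioi 0, (volume.restrict (Metric.ball (0:ℂ) R)) {a | t ≤ ‖a‖ ^ (-s)}
      ≤ ∫⁻ t in Ioc 0 T ∪ Ioi T, _ := lintegral_mono_set (fun t ht => by
        rcases le_or_gt t T with h | h
        · exact Or.inl ⟨ht, h⟩
        · exact Or.inr h)
    _ ≤ (∫⁻ t in Ioc 0 T, (volume.restrict (Metric.ball (0:ℂ) R)) {a | t ≤ ‖a‖ ^ (-s)})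
        + ∫⁻ t in Ioi T, (volume.restrict (Metric.ball (0:ℂ) R)) {a | t ≤ ‖a‖ ^ (-s)} :=
        lintegral_union_le _ _ _
    _ ≤ ENNReal.ofReal (Real.pi * R ^ (2-s)) + ENNReal.ofReal (Real.pi * (s/(2-s)) * R ^ (2-s)) := by
        gcongr
        · -- first piece
          calc ∫⁻ t in Ioc 0 T, (volume.restrict (Metric.ball (0:ℂ) R)) {a | t ≤ ‖a‖ ^ (-s)}
              ≤ ∫⁻ _ in Ioc 0 T, volume (Metric.ball (0:ℂ) R) :=
                lintegral_mono fun t => le_trans (measure_mono (subset_univ _))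
                  (by rw [Measure.restrict_apply_univ])
            _ = volume (Metric.ball (0:ℂ) R) * volume (Ioc 0 T) := by
                rw [lintegral_const, Measure.restrict_apply_univ]
            _ ≤ ENNReal.ofReal (Real.pi * R ^ (2:ℝ)) * ENNReal.ofReal T := by
                gcongr
                · rw [← vol_closedBall_rpow hR.le]
                  exact measure_mono Metric.ball_subset_closedBall
                · rw [Real.volume_Ioc]
                  exact ENNReal.ofReal_le_ofReal (by simp)
            _ = ENNReal.ofReal (Real.pi * R ^ (2-s)) := by
                rw [← ENNReal.ofReal_mul (by positivity), mul_assoc, ← Real.rpow_add hR]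
                norm_num [← sub_eq_add_neg]
        · -- second piece
          calc ∫⁻ t in Ioi T, (volume.restrict (Metric.ball (0:ℂ) R)) {a | t ≤ ‖a‖ ^ (-s)}
              ≤ ∫⁻ t in Ioi T, ENNReal.ofReal (Real.pi * (t ^ (-(2/s)))) := by
                refine setLIntegral_mono' measurableSet_Ioi fun t ht => ?_
                have ht0 : 0 < t := lt_trans hTpos ht
                calc (volume.restrict (Metric.ball (0:ℂ) R)) {a | t ≤ ‖a‖ ^ (-s)}
                    ≤ volume {a : ℂ | t ≤ ‖a‖ ^ (-s)} := Measure.restrict_le_self _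
                  _ ≤ volume (Metric.closedBall (0:ℂ) (t ^ (-s⁻¹))) :=
                      measure_mono (superlevel_subset hs0 ht0)
                  _ = ENNReal.ofReal (Real.pi * (t ^ (-s⁻¹)) ^ (2:ℝ)) :=
                      vol_closedBall_rpow (by positivity)
                  _ = ENNReal.ofReal (Real.pi * (t ^ (-(2/s)))) := by
                      rw [← Real.rpow_mul ht0.le]
                      ring_nf
            _ = ENNReal.ofReal (∫ t in Ioi T, Real.pi * (t ^ (-(2/s)))) := by
                rw [ofReal_integral_eq_lintegral_ofReal]
                · exact ((integrableOn_Ioi_rpow_of_lt (by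
                    rw [neg_lt_neg_iff]; rw [lt_div_iff₀ hs0]; linarith) hTpos).const_mul _)
                · exact (ae_restrict_iff' measurableSet_Ioi).2 (Filter.Eventually.of_forall
                    fun t ht => mul_nonneg Real.pi_pos.le
                      (Real.rpow_nonneg (le_of_lt (hTpos.trans ht)) _))
            _ = ENNReal.ofReal (Real.pi * (s/(2-s)) * R ^ (2-s)) := by
                congr 1
                rw [integral_const_mul, integral_Ioi_rpow_of_lt
                  (by rw [neg_lt_neg_iff, lt_div_iff₀ hs0]; linarith) hTpos]
                rw [← Real.rpow_mul hR.le,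
                  show -s * (-(2/s) + 1) = 2 - s by field_simp; ring]
                have h2s : (0:ℝ) < 2 - s := by linarith
                have hne : (-2:ℝ) + s ≠ 0 := by intro h; linarith
                field_simp
                ring
    _ = ENNReal.ofReal ((Real.pi + Real.pi * (s / (2 - s))) * R ^ (2 - s)) := by
        have h2s : (0:ℝ) < 2 - s := by linarith
        rw [← ENNReal.ofReal_add (by positivity)
          (mul_nonneg (mul_nonneg Real.pi_pos.le (div_nonneg hs0.le h2s.le))
            (Real.rpow_nonneg hR.le _))]
        ring_nf

lemma lint_compl_rpow {q R : ℝ} (h2q : 2 < q) (hR : 0 < R) :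
    ∫⁻ w : ℂ in (Metric.ball (0:ℂ) R)ᶜ, ENNReal.ofReal (‖w‖ ^ (-q)) ≤
      ENNReal.ofReal ((Real.pi * (q / (q - 2))) * R ^ (2 - q)) := by
  have hq0 : 0 < q := by linarith
  have hmeas : Measurable (fun a : ℂ => ‖a‖ ^ (-q)) := by fun_prop
  rw [lintegral_eq_lintegral_meas_le _ (Filter.Eventually.of_forall fun a => by positivity)
    hmeas.aemeasurable]
  set T : ℝ := R ^ (-q) with hT
  have hTpos : 0 < T := Real.rpow_pos_of_pos hR _
  have hexp : (-1:ℝ) < -(2/q) := by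
    rw [neg_lt_neg_iff, div_lt_iff₀ hq0]; linarith
  calc ∫⁻ t in Ioi 0, (volume.restrict (Metric.ball (0:ℂ) R)ᶜ) {a | t ≤ ‖a‖ ^ (-q)}
      ≤ ∫⁻ t in Ioc 0 T ∪ Ioi T, _ := lintegral_mono_set (fun t ht => by
        rcases le_or_gt t T with h | h
        · exact Or.inl ⟨ht, h⟩
        · exact Or.inr h)
    _ ≤ (∫⁻ t in Ioc 0 T, (volume.restrict (Metric.ball (0:ℂ) R)ᶜ) {a | t ≤ ‖a‖ ^ (-q)})
        + ∫⁻ t in Ioi T, (volume.restrict (Metric.ball (0:ℂ) R)ᶜ) {a | t ≤ ‖a‖ ^ (-q)} :=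
        lintegral_union_le _ _ _
    _ ≤ ENNReal.ofReal ((Real.pi * (q / (q - 2))) * R ^ (2 - q)) + 0 := by
        gcongr
        · calc ∫⁻ t in Ioc 0 T, (volume.restrict (Metric.ball (0:ℂ) R)ᶜ) {a | t ≤ ‖a‖ ^ (-q)}
              ≤ ∫⁻ t in Ioc 0 T, ENNReal.ofReal (Real.pi * (t ^ (-(2/q)))) := by
                refine setLIntegral_mono' measurableSet_Ioc fun t ht => ?_
                calc (volume.restrict (Metric.ball (0:ℂ) R)ᶜ) {a | t ≤ ‖a‖ ^ (-q)}
                    ≤ volume {a : ℂ | t ≤ ‖a‖ ^ (-q)} := Measure.restrict_le_self _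
                  _ ≤ volume (Metric.closedBall (0:ℂ) (t ^ (-q⁻¹))) :=
                      measure_mono (superlevel_subset hq0 ht.1)
                  _ = ENNReal.ofReal (Real.pi * (t ^ (-q⁻¹)) ^ (2:ℝ)) :=
                      vol_closedBall_rpow (Real.rpow_nonneg ht.1.le _)
                  _ = ENNReal.ofReal (Real.pi * (t ^ (-(2/q)))) := by
                      rw [← Real.rpow_mul ht.1.le]
                      ring_nf
            _ = ENNReal.ofReal (∫ t in Ioc 0 T, Real.pi * (t ^ (-(2/q)))) := by
                rw [ofReal_integral_eq_lintegral_ofReal]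
                · exact ((intervalIntegrable_iff_integrableOn_Ioc_of_le hTpos.le).1
                    (intervalIntegral.intervalIntegrable_rpow' hexp)).const_mul _
                · exact (ae_restrict_iff' measurableSet_Ioc).2 (Filter.Eventually.of_forall
                    fun t ht => mul_nonneg Real.pi_pos.le (Real.rpow_nonneg ht.1.le _))
            _ ≤ ENNReal.ofReal ((Real.pi * (q / (q - 2))) * R ^ (2 - q)) := by
                apply ENNReal.ofReal_le_ofReal
                rw [MeasureTheory.integral_const_mul, ← intervalIntegral.integral_of_le hTpos.le,
                  integral_rpow (Or.inl hexp)]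
                have hpos1 : (0:ℝ) < -(2/q) + 1 := by linarith
                rw [Real.zero_rpow hpos1.ne', hT,
                  ← Real.rpow_mul hR.le,
                  show -q * (-(2/q) + 1) = 2 - q by field_simp; ring]
                have h2q' : (0:ℝ) < q - 2 := by linarith
                rw [sub_zero]
                have hne : -(2/q) + 1 = (q-2)/q := by field_simp; ring
                rw [hne]
                rw [div_div_eq_mul_div]
                apply le_of_eq
                ring
        · -- far piece is zero
          have hS : ∀ t, MeasurableSet {a : ℂ | t ≤ ‖a‖ ^ (-q)} := fun t =>
            measurableSet_le measurable_const hmeas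
          calc ∫⁻ t in Ioi T, (volume.restrict (Metric.ball (0:ℂ) R)ᶜ) {a | t ≤ ‖a‖ ^ (-q)}
              ≤ ∫⁻ _ in Ioi T, 0 := by
                refine setLIntegral_mono' measurableSet_Ioi fun t ht => ?_
                rw [Measure.restrict_apply (hS t)]
                have : {a : ℂ | t ≤ ‖a‖ ^ (-q)} ∩ (Metric.ball (0:ℂ) R)ᶜ = ∅ := by
                  ext a
                  simp only [mem_inter_iff, mem_setOf_eq, mem_compl_iff, Metric.mem_ball,
                    dist_zero_right, not_lt, mem_empty_iff_false, iff_false, not_and]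
                  intro hta hRa
                  have : ‖a‖ ^ (-q) ≤ R ^ (-q) :=
                    Real.rpow_le_rpow_of_nonpos hR hRa (neg_nonpos.2 hq0.le)
                  have := lt_of_lt_of_le ht (hta.trans this)
                  exact absurd rfl this.ne
                rw [this, measure_empty]
            _ = 0 := lintegral_zero
    _ = ENNReal.ofReal ((Real.pi * (q / (q - 2))) * R ^ (2 - q)) := by rw [add_zero]

lemma lint_sub_shift (g : ℂ → ℝ≥0∞) (z : ℂ) (A : Set ℂ) :
    ∫⁻ ζ in A, g (ζ - z) = ∫⁻ w in (fun w => w + z) ⁻¹' A, g w := by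
  rw [← (measurePreserving_add_right volume z).setLIntegral_comp_preimage_emb
    (measurableEmbedding_addRight z) (fun ζ => g (ζ - z)) A]
  simp

lemma ball_preimage' (z c : ℂ) (R : ℝ) :
    (fun w => w + z) ⁻¹' (Metric.ball c R) = Metric.ball (c - z) R := by
  ext w; simp [dist_eq_norm]

lemma vol_closedBall_rpow' (a : ℂ) {c : ℝ} (hc : 0 ≤ c) :
    volume (Metric.closedBall a c) = ENNReal.ofReal (Real.pi * c ^ (2:ℝ)) := by
  rw [Complex.volume_closedBall, ← ENNReal.ofReal_pow hc, ← Real.rpow_natCast c 2,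
    ← ENNReal.ofReal_coe_nnreal, NNReal.coe_real_pi, ← ENNReal.ofReal_mul (by positivity),
    mul_comm]
  norm_num

lemma opnorm_le (L : ℂ →L[ℝ] ℂ) : ‖L‖ ≤ ‖L 1‖ + ‖L I‖ := by
  refine ContinuousLinearMap.opNorm_le_bound _ (by positivity) fun z => ?_
  have hz : z = z.re • (1:ℂ) + z.im • I := by
    simp [Complex.real_smul, Complex.re_add_im]
  calc ‖L z‖ = ‖z.re • L 1 + z.im • L I‖ := by rw [← _root_.map_smul, ← _root_.map_smul, ← _root_.map_add, ← hz]
    _ ≤ ‖z.re • L 1‖ + ‖z.im • L I‖ := norm_add_le _ _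
    _ = |z.re| * ‖L 1‖ + |z.im| * ‖L I‖ := by rw [norm_smul, norm_smul]; simp
    _ ≤ ‖z‖ * ‖L 1‖ + ‖z‖ * ‖L I‖ := by
        gcongr
        · exact Complex.abs_re_le_norm z
        · exact Complex.abs_im_le_norm z
    _ = (‖L 1‖ + ‖L I‖) * ‖z‖ := by ring

lemma sobolev_step (Ω : Set ℂ) {p p' : ℝ} (hp1 : 1 ≤ p) (hp2 : p < 2)
    (hp' : p' = (1/p - 1/2)⁻¹) :
    ∃ Cg : ℝ, 0 < Cg ∧ ∀ f : ℂ → ℂ, ContDiff ℝ (⊤ : ℕ∞) f → HasCompactSupport f → tsupport f ⊆ Ω →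
      eLpNorm f (ENNReal.ofReal p') volume ≤
        ENNReal.ofReal Cg * W1pNorm Ω (ENNReal.ofReal p) f := by
  have hp0 : 0 < p := by linarith
  set pn : ℝ≥0 := p.toNNReal with hpn
  set p'n : ℝ≥0 := p'.toNNReal with hp'n
  have hpco : ((pn : ℝ)) = p := Real.coe_toNNReal p hp0.le
  have hip : (0:ℝ) < 1/p - 1/2 := by
    rw [sub_pos]
    rw [div_lt_div_iff₀ (by norm_num) hp0]
    linarith
  have hp'0 : 0 < p' := by rw [hp']; positivity
  have hp'co : ((p'n : ℝ)) = p' := Real.coe_toNNReal p' hp'0.le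
  refine ⟨(SNormLESNormFDerivOfEqConst ℂ (volume : Measure ℂ) pn : ℝ) + 1, by positivity,
    fun f hf hfc hfs => ?_⟩
  set K := SNormLESNormFDerivOfEqConst ℂ (volume : Measure ℂ) pn with hK
  have hgns : eLpNorm f p'n (volume : Measure ℂ) ≤ K * eLpNorm (fderiv ℝ f) pn volume := by
    refine eLpNorm_le_eLpNorm_fderiv_of_eq (volume : Measure ℂ) (hf.of_le (by simp)) hfc ?_
      (by simp [Complex.finrank_real_complex]) ?_
    · rw [← NNReal.coe_le_coe, hpco]; norm_num; exact hp1
    · rw [hp'co, NNReal.coe_inv, hpco, Complex.finrank_real_complex, hp', inv_inv]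
      norm_num
  have hcont : Continuous (fderiv ℝ f) := hf.continuous_fderiv (by simp)
  have h1c : Continuous (fun z => fderiv ℝ f z 1) := hcont.clm_apply continuous_const
  have hIc : Continuous (fun z => fderiv ℝ f z I) := hcont.clm_apply continuous_const
  have hdir : eLpNorm (fderiv ℝ f) pn (volume : Measure ℂ) ≤
      eLpNorm (fun z => fderiv ℝ f z 1) pn volume +
        eLpNorm (fun z => fderiv ℝ f z I) pn volume := by
    calc eLpNorm (fderiv ℝ f) pn (volume : Measure ℂ)
        ≤ eLpNorm (fun z => ‖fderiv ℝ f z 1‖ + ‖fderiv ℝ f z I‖) pn volume :=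
          eLpNorm_mono_real fun z => opnorm_le _
      _ ≤ eLpNorm (fun z => ‖fderiv ℝ f z 1‖) pn volume +
            eLpNorm (fun z => ‖fderiv ℝ f z I‖) pn volume := by
          refine eLpNorm_add_le ?_ ?_ ?_
          · exact (h1c.norm).aestronglyMeasurable
          · exact (hIc.norm).aestronglyMeasurable
          · rw [← ENNReal.coe_one, ENNReal.coe_le_coe, ← NNReal.coe_le_coe, hpco]
            norm_num; exact hp1
      _ = eLpNorm (fun z => fderiv ℝ f z 1) pn volume +
            eLpNorm (fun z => fderiv ℝ f z I) pn volume := by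
          rw [eLpNorm_norm, eLpNorm_norm]
  -- restrict = global for the derivative components
  have hsupp1 : (Function.support fun z => fderiv ℝ f z 1) ⊆ Ω := fun z hz => by
    apply hfs
    apply support_fderiv_subset ℝ (f := f)
    intro h0
    apply hz
    simp [h0]
  have hsuppI : (Function.support fun z => fderiv ℝ f z I) ⊆ Ω := fun z hz => by
    apply hfs
    apply support_fderiv_subset ℝ (f := f)
    intro h0
    apply hz
    simp [h0]
  have hofp : (ENNReal.ofReal p) = (pn : ℝ≥0∞) := rfl
  have hofp' : (ENNReal.ofReal p') = (p'n : ℝ≥0∞) := rfl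
  calc eLpNorm f (ENNReal.ofReal p') volume ≤ K * eLpNorm (fderiv ℝ f) pn volume := by
        rw [hofp']; exact hgns
    _ ≤ K * (eLpNorm (fun z => fderiv ℝ f z 1) pn (volume.restrict Ω) +
          eLpNorm (fun z => fderiv ℝ f z I) pn (volume.restrict Ω)) := by
        rw [eLpNorm_restrict_eq_of_support_subset hsupp1,
          eLpNorm_restrict_eq_of_support_subset hsuppI]
        exact mul_le_mul_right hdir _
    _ ≤ K * W1pNorm Ω (ENNReal.ofReal p) f := by
        refine mul_le_mul_right ?_ _
        rw [W1pNorm, hofp, add_assoc]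
        exact le_add_self
    _ ≤ ENNReal.ofReal ((K : ℝ) + 1) * W1pNorm Ω (ENNReal.ofReal p) f := by
        refine mul_le_mul_left ?_ _
        rw [← ENNReal.ofReal_coe_nnreal]
        exact ENNReal.ofReal_le_ofReal (by linarith)

lemma core_bound (Ω : Set ℂ) {p' σ q : ℝ} (hpσ : Real.HolderConjugate p' σ) (hσ2 : σ < 2)
    (hq2 : 2 < q) {r : ℝ} (hr : 0 < r) (z₀ : ℂ) {g f : ℂ → ℂ} (hfc : Continuous f)
    (hgf : ∀ ζ, (‖g ζ‖₊ : ℝ≥0∞) ≤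
      (Metric.closedBall z₀ r).indicator (fun ζ => ((‖f ζ‖₊ : ℝ≥0∞))) ζ) :
    eLpNorm (cauchyT Ω g) (ENNReal.ofReal q) (volume.restrict Ω) ≤
      ENNReal.ofReal (Real.pi⁻¹ * (((Real.pi + Real.pi * (σ/(2-σ))) * (3*r)^(2-σ))^(1/σ) *
          (Real.pi * (2*r)^(2:ℝ))^(1/q))
        + Real.pi⁻¹ * ((2 * (Real.pi * r^(2:ℝ))^(1/σ)) *
          ((Real.pi * (q/(q-2))) * (2*r)^(2-q))^(1/q)))
        * eLpNorm f (ENNReal.ofReal p') volume := by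
  have hσ0 : 0 < σ := by have := (Real.holderConjugate_iff.1 hpσ.symm).1; linarith
  have hσ1 : 0 < 1/σ := by positivity
  have hq0 : 0 < q := by linarith
  have hq1 : (1:ℝ) ≤ q := by linarith
  have hp'0 : 0 < p' := by have := (Real.holderConjugate_iff.1 hpσ).1; linarith
  set D := Metric.closedBall z₀ r with hD
  set B := Metric.ball z₀ (2*r) with hB
  set N := eLpNorm f (ENNReal.ofReal p') volume with hN
  set I : ℂ → ℝ≥0∞ :=
    fun z => ∫⁻ ζ in D, (‖f ζ‖₊ : ℝ≥0∞) * (ENNReal.ofReal ‖ζ - z‖)⁻¹ with hI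
  -- abbreviations for constants
  set A1 : ℝ≥0∞ := (ENNReal.ofReal ((Real.pi + Real.pi * (σ/(2-σ))) * (3*r)^(2-σ)))^(1/σ)
    with hA1
  set A2 : ℝ≥0∞ := (ENNReal.ofReal (Real.pi * r^(2:ℝ)))^(1/σ) with hA2
  set A3 : ℝ≥0∞ := (ENNReal.ofReal ((Real.pi * (q/(q-2))) * (2*r)^(2-q)))^(1/q) with hA3
  have hdiv : ∀ (a b : ℂ), (‖a / b‖₊ : ℝ≥0∞) ≤ (‖a‖₊ : ℝ≥0∞) * (ENNReal.ofReal ‖b‖)⁻¹ := by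
    intro a b
    rcases eq_or_ne b 0 with rfl | hb
    · simp
    · rw [nnnorm_div, ofReal_norm, enorm_eq_nnnorm, ENNReal.coe_div (nnnorm_ne_zero_iff.2 hb),
        div_eq_mul_inv]
  -- pointwise bound via the integral I
  have hpoint : ∀ z, (‖cauchyT Ω g z‖₊ : ℝ≥0∞) ≤ ENNReal.ofReal (Real.pi⁻¹) * I z := by
    intro z
    rw [cauchyT]
    calc (‖(-(1 / Real.pi) : ℝ) • ∫ ζ in Ω, g ζ / (ζ - z)‖₊ : ℝ≥0∞)
        = (‖(-(1/Real.pi):ℝ)‖₊ : ℝ≥0∞) * (‖∫ ζ in Ω, g ζ / (ζ - z)‖₊ : ℝ≥0∞) := by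
          rw [nnnorm_smul, ENNReal.coe_mul]
      _ ≤ ENNReal.ofReal (Real.pi⁻¹) * I z := by
          refine mul_le_mul ?_ ?_ zero_le zero_le
          · apply le_of_eq
            rw [← enorm_eq_nnnorm, Real.enorm_eq_ofReal_abs, abs_neg, abs_of_pos (by positivity), one_div]
          · calc (‖∫ ζ in Ω, g ζ / (ζ - z)‖₊ : ℝ≥0∞)
                ≤ ∫⁻ ζ in Ω, ‖g ζ / (ζ - z)‖₊ := enorm_integral_le_lintegral_enorm _
              _ ≤ ∫⁻ ζ in Ω,
                    D.indicator (fun ζ => (‖f ζ‖₊:ℝ≥0∞) * (ENNReal.ofReal ‖ζ - z‖)⁻¹) ζ := by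
                  refine lintegral_mono fun ζ => ?_
                  by_cases hζ : ζ ∈ D
                  · rw [Set.indicator_of_mem hζ]
                    refine le_trans (hdiv _ _) (mul_le_mul_left ?_ _)
                    have := hgf ζ
                    rwa [Set.indicator_of_mem hζ] at this
                  · rw [Set.indicator_of_notMem hζ]
                    have := hgf ζ
                    rw [Set.indicator_of_notMem hζ] at this
                    have hg0 : g ζ = 0 := by
                      have : (‖g ζ‖₊ : ℝ≥0∞) = 0 := le_antisymm this zero_le
                      simpa using this
                    simp [hg0]
              _ ≤ ∫⁻ ζ, D.indicator (fun ζ => (‖f ζ‖₊:ℝ≥0∞) * (ENNReal.ofReal ‖ζ - z‖)⁻¹) ζ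
                    ∂volume := lintegral_mono' Measure.restrict_le_self le_rfl
              _ = I z := by rw [lintegral_indicator measurableSet_closedBall]
  have hfm : ∀ μ' : Measure ℂ, AEMeasurable (fun ζ => (‖f ζ‖₊ : ℝ≥0∞)) μ' := fun μ' =>
    (hfc.measurable.nnnorm.coe_nnreal_ennreal).aemeasurable
  have hofne : (ENNReal.ofReal p') ≠ 0 := (ENNReal.ofReal_pos.2 hp'0).ne'
  have hfD : (∫⁻ ζ in D, (‖f ζ‖₊:ℝ≥0∞) ^ p') ^ (1/p') ≤ N := by
    rw [hN, eLpNorm_eq_lintegral_rpow_enorm_toReal hofne ENNReal.ofReal_ne_top,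
      ENNReal.toReal_ofReal hp'0.le]
    exact ENNReal.rpow_le_rpow (lintegral_mono' Measure.restrict_le_self le_rfl)
      (by positivity)
  -- near bound
  have hnear : ∀ z ∈ B, I z ≤ N * A1 := by
    intro z hz
    have hker : AEMeasurable (fun ζ : ℂ => (ENNReal.ofReal ‖ζ - z‖)⁻¹)
        (volume.restrict D) :=
      (((measurable_id.sub_const z).norm.ennreal_ofReal).inv).aemeasurable
    have hsub : D ⊆ Metric.ball z (3*r) := by
      intro ζ hζ
      rw [Metric.mem_closedBall] at hζ
      rw [Metric.mem_ball]
      rw [Metric.mem_ball] at hz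
      calc dist ζ z ≤ dist ζ z₀ + dist z₀ z := dist_triangle _ _ _
        _ < r + 2*r := by
            rw [dist_comm z₀ z]
            exact add_lt_add_of_le_of_lt hζ hz
        _ = 3*r := by ring
    calc I z ≤ (∫⁻ ζ in D, (‖f ζ‖₊:ℝ≥0∞) ^ p') ^ (1/p') *
        (∫⁻ ζ in D, ((ENNReal.ofReal ‖ζ - z‖)⁻¹) ^ σ) ^ (1/σ) := by
          have := ENNReal.lintegral_mul_le_Lp_mul_Lq (volume.restrict D) hpσ (hfm _) hker
          simpa [hI] using this
      _ ≤ N * A1 := by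
          refine mul_le_mul hfD ?_ zero_le zero_le
          rw [hA1]
          refine ENNReal.rpow_le_rpow ?_ hσ1.le
          calc ∫⁻ ζ in D, ((ENNReal.ofReal ‖ζ - z‖)⁻¹) ^ σ
              = ∫⁻ ζ in D, ENNReal.ofReal (‖ζ - z‖ ^ (-σ)) := by
                refine lintegral_congr_ae ?_
                have hsub2 : {ζ : ℂ | ¬ ((ENNReal.ofReal ‖ζ - z‖)⁻¹) ^ σ
                    = ENNReal.ofReal (‖ζ - z‖ ^ (-σ))} ⊆ {z} := by
                  intro ζ hζ
                  by_contra hne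
                  apply hζ
                  have hzz : ζ ≠ z := by simpa using hne
                  have hpos : 0 < ‖ζ - z‖ := by
                    rw [norm_pos_iff, sub_ne_zero]; exact hzz
                  rw [ENNReal.inv_rpow, ← ENNReal.rpow_neg,
                    ENNReal.ofReal_rpow_of_pos hpos]
                exact (ae_iff.2 (measure_mono_null hsub2 (measure_singleton z))).filter_mono
                  (ae_mono Measure.restrict_le_self)
            _ ≤ ∫⁻ ζ in Metric.ball z (3*r), ENNReal.ofReal (‖ζ - z‖ ^ (-σ)) :=
                lintegral_mono_set hsub
            _ = ∫⁻ w in Metric.ball (0:ℂ) (3*r), ENNReal.ofReal (‖w‖ ^ (-σ)) := by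
                rw [lint_sub_shift (fun w => ENNReal.ofReal (‖w‖ ^ (-σ))) z
                  (Metric.ball z (3*r)), ball_preimage', sub_self]
            _ ≤ ENNReal.ofReal ((Real.pi + Real.pi * (σ/(2-σ))) * (3*r)^(2-σ)) :=
                lint_ball_rpow hσ0 hσ2 (by linarith)
  -- far bound
  have hfar : ∀ z ∉ B, I z ≤ (2 * N * A2) * (ENNReal.ofReal ‖z - z₀‖)⁻¹ := by
    intro z hz
    have hz2r : 2*r ≤ ‖z - z₀‖ := by
      rw [hB, Metric.mem_ball, not_lt, dist_eq_norm] at hz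
      exact hz
    have hzpos : (0:ℝ) < ‖z - z₀‖ := by linarith
    have hker : ∀ ζ ∈ D, (ENNReal.ofReal ‖ζ - z‖)⁻¹ ≤ 2 * (ENNReal.ofReal ‖z - z₀‖)⁻¹ := by
      intro ζ hζ
      have hd : ‖ζ - z₀‖ ≤ r := by
        rw [hD, Metric.mem_closedBall, dist_eq_norm] at hζ
        exact hζ
      have htri : ‖z - z₀‖ ≤ ‖ζ - z‖ + ‖ζ - z₀‖ := by
        calc ‖z - z₀‖ = ‖(z - ζ) + (ζ - z₀)‖ := by ring_nf
          _ ≤ ‖z - ζ‖ + ‖ζ - z₀‖ := norm_add_le _ _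
          _ = ‖ζ - z‖ + ‖ζ - z₀‖ := by rw [norm_sub_rev]
      have h1 : ‖z - z₀‖/2 ≤ ‖ζ - z‖ := by linarith
      calc (ENNReal.ofReal ‖ζ - z‖)⁻¹ ≤ (ENNReal.ofReal (‖z - z₀‖/2))⁻¹ :=
          ENNReal.inv_le_inv' (ENNReal.ofReal_le_ofReal h1)
        _ = 2 * (ENNReal.ofReal ‖z - z₀‖)⁻¹ := by
            rw [ENNReal.ofReal_div_of_pos two_pos,
              ENNReal.inv_div (Or.inr (ENNReal.ofReal_ne_top))
                (Or.inr (ENNReal.ofReal_pos.2 hzpos).ne'), div_eq_mul_inv]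
            norm_num
    have hL1 : ∫⁻ ζ in D, (‖f ζ‖₊:ℝ≥0∞) ≤ N * A2 := by
      calc ∫⁻ ζ in D, (‖f ζ‖₊:ℝ≥0∞)
          ≤ (∫⁻ ζ in D, (‖f ζ‖₊:ℝ≥0∞) ^ p') ^ (1/p') *
            (∫⁻ ζ in D, (1:ℝ≥0∞) ^ σ) ^ (1/σ) := by
            have := ENNReal.lintegral_mul_le_Lp_mul_Lq (volume.restrict D) hpσ (hfm _)
              aemeasurable_const (g := fun _ => (1:ℝ≥0∞))
            simpa using this
        _ ≤ N * A2 := by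
            refine mul_le_mul hfD ?_ zero_le zero_le
            rw [hA2]
            refine ENNReal.rpow_le_rpow ?_ hσ1.le
            simp only [ENNReal.one_rpow]
            rw [setLIntegral_one, hD, vol_closedBall_rpow' z₀ hr.le]
    calc I z ≤ ∫⁻ ζ in D, (‖f ζ‖₊:ℝ≥0∞) * (2 * (ENNReal.ofReal ‖z - z₀‖)⁻¹) :=
        setLIntegral_mono' measurableSet_closedBall fun ζ hζ =>
          mul_le_mul_right (hker ζ hζ) _
      _ = (∫⁻ ζ in D, (‖f ζ‖₊:ℝ≥0∞)) * (2 * (ENNReal.ofReal ‖z - z₀‖)⁻¹) :=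
          lintegral_mul_const' _ _ (by
            refine ENNReal.mul_ne_top (by norm_num) ?_
            rw [ENNReal.inv_ne_top]
            exact (ENNReal.ofReal_pos.2 hzpos).ne')
      _ ≤ (N * A2) * (2 * (ENNReal.ofReal ‖z - z₀‖)⁻¹) := mul_le_mul_left hL1 _
      _ = (2 * N * A2) * (ENNReal.ofReal ‖z - z₀‖)⁻¹ := by ring

  -- assembly
  have h2σ : (0:ℝ) < 2 - σ := by linarith
  have hq2' : (0:ℝ) < q - 2 := by linarith
  have hb1 : (0:ℝ) < (Real.pi + Real.pi * (σ/(2-σ))) * (3*r)^(2-σ) :=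
    mul_pos (add_pos_of_pos_of_nonneg Real.pi_pos
      (mul_nonneg Real.pi_pos.le (div_nonneg hσ0.le h2σ.le)))
      (Real.rpow_pos_of_pos (by linarith) _)
  have hb2 : (0:ℝ) < Real.pi * r^(2:ℝ) := mul_pos Real.pi_pos (Real.rpow_pos_of_pos hr _)
  have hb2' : (0:ℝ) < Real.pi * (2*r)^(2:ℝ) :=
    mul_pos Real.pi_pos (Real.rpow_pos_of_pos (by linarith) _)
  have hb3 : (0:ℝ) < (Real.pi * (q/(q-2))) * (2*r)^(2-q) :=
    mul_pos (mul_pos Real.pi_pos (div_pos hq0 hq2')) (Real.rpow_pos_of_pos (by linarith) _)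
  set c1 : ℝ≥0∞ := ENNReal.ofReal (Real.pi⁻¹) * (N * A1) with hc1
  set c2 : ℝ≥0∞ := ENNReal.ofReal (Real.pi⁻¹) * (2 * N * A2) with hc2
  set h1 : ℂ → ℝ≥0∞ := fun z => B.indicator (fun _ => c1) z with hh1
  set h2 : ℂ → ℝ≥0∞ := fun z => Bᶜ.indicator
    (fun z => c2 * (ENNReal.ofReal ‖z - z₀‖)⁻¹) z with hh2
  have hpt : ∀ z, (‖cauchyT Ω g z‖₊ : ℝ≥0∞) ≤ h1 z + h2 z := by
    intro z
    by_cases hz : z ∈ B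
    · have hz' : z ∉ Bᶜ := fun h => h hz
      rw [hh1, hh2]
      simp only [Set.indicator_of_mem hz, Set.indicator_of_notMem hz']
      rw [add_zero, hc1]
      exact le_trans (hpoint z) (mul_le_mul_right (hnear z hz) _)
    · rw [hh1, hh2]
      simp only [Set.indicator_of_notMem hz, Set.indicator_of_mem (Set.mem_compl hz)]
      rw [zero_add, hc2]
      refine le_trans (hpoint z) ?_
      calc ENNReal.ofReal Real.pi⁻¹ * I z
          ≤ ENNReal.ofReal Real.pi⁻¹ * ((2 * N * A2) * (ENNReal.ofReal ‖z - z₀‖)⁻¹) :=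
            mul_le_mul_right (hfar z hz) _
        _ = (ENNReal.ofReal Real.pi⁻¹ * (2 * N * A2)) * (ENNReal.ofReal ‖z - z₀‖)⁻¹ := by
            ring
  have h1m : AEMeasurable h1 (volume.restrict Ω) :=
    (measurable_const.indicator measurableSet_ball).aemeasurable
  have hkerm : Measurable (fun z : ℂ => (ENNReal.ofReal ‖z - z₀‖)⁻¹) :=
    ((measurable_id.sub_const z₀).norm.ennreal_ofReal).inv
  have h2m : AEMeasurable h2 (volume.restrict Ω) :=
    ((measurable_const.mul hkerm).indicator measurableSet_ball.compl).aemeasurable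
  have hqof0 : (ENNReal.ofReal q) ≠ 0 := (ENNReal.ofReal_pos.2 hq0).ne'
  have T1 : (∫⁻ z in Ω, h1 z ^ q) ^ (1/q) ≤
      c1 * (ENNReal.ofReal (Real.pi * (2*r)^(2:ℝ)))^(1/q) := by
    have e1 : ∫⁻ z in Ω, h1 z ^ q ≤ c1 ^ q * ENNReal.ofReal (Real.pi * (2*r)^(2:ℝ)) := by
      calc ∫⁻ z in Ω, h1 z ^ q ≤ ∫⁻ z, h1 z ^ q ∂volume :=
          lintegral_mono' Measure.restrict_le_self le_rfl
        _ = ∫⁻ z, B.indicator (fun _ => c1 ^ q) z ∂volume := by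
            refine lintegral_congr fun z => ?_
            by_cases hz : z ∈ B
            · simp only [hh1, Set.indicator_of_mem hz]
            · simp only [hh1, Set.indicator_of_notMem hz, ENNReal.zero_rpow_of_pos hq0]
        _ = c1 ^ q * volume B := by
            rw [lintegral_indicator measurableSet_ball, setLIntegral_const]
        _ ≤ c1 ^ q * ENNReal.ofReal (Real.pi * (2*r)^(2:ℝ)) := by
            refine mul_le_mul_right ?_ _
            rw [hB, ← vol_closedBall_rpow' z₀ (by linarith : (0:ℝ) ≤ 2*r)]
            exact measure_mono Metric.ball_subset_closedBall
    calc (∫⁻ z in Ω, h1 z ^ q) ^ (1/q)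
        ≤ (c1 ^ q * ENNReal.ofReal (Real.pi * (2*r)^(2:ℝ)))^(1/q) :=
          ENNReal.rpow_le_rpow e1 (by positivity)
      _ = c1 * (ENNReal.ofReal (Real.pi * (2*r)^(2:ℝ)))^(1/q) := by
          rw [ENNReal.mul_rpow_of_nonneg _ _ (by positivity), ← ENNReal.rpow_mul,
            mul_one_div_cancel hq0.ne', ENNReal.rpow_one]
  have T2 : (∫⁻ z in Ω, h2 z ^ q) ^ (1/q) ≤ c2 * A3 := by
    have e2 : ∫⁻ z in Ω, h2 z ^ q ≤
        c2 ^ q * ENNReal.ofReal ((Real.pi * (q/(q-2))) * (2*r)^(2-q)) := by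
      calc ∫⁻ z in Ω, h2 z ^ q ≤ ∫⁻ z, h2 z ^ q ∂volume :=
          lintegral_mono' Measure.restrict_le_self le_rfl
        _ = ∫⁻ z, Bᶜ.indicator
              (fun z => c2 ^ q * ((ENNReal.ofReal ‖z - z₀‖)⁻¹) ^ q) z ∂volume := by
            refine lintegral_congr fun z => ?_
            by_cases hz : z ∈ Bᶜ
            · simp only [hh2, Set.indicator_of_mem hz]
              rw [ENNReal.mul_rpow_of_nonneg _ _ hq0.le]
            · simp only [hh2, Set.indicator_of_notMem hz, ENNReal.zero_rpow_of_pos hq0]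
        _ = c2 ^ q * ∫⁻ z in Bᶜ, ((ENNReal.ofReal ‖z - z₀‖)⁻¹) ^ q ∂volume := by
            rw [lintegral_indicator measurableSet_ball.compl,
              lintegral_const_mul'' _ ((hkerm.pow_const q).aemeasurable)]
        _ ≤ c2 ^ q * ENNReal.ofReal ((Real.pi * (q/(q-2))) * (2*r)^(2-q)) := by
            refine mul_le_mul_right ?_ _
            calc ∫⁻ z in Bᶜ, ((ENNReal.ofReal ‖z - z₀‖)⁻¹) ^ q ∂volume
                = ∫⁻ z in Bᶜ, ENNReal.ofReal (‖z - z₀‖ ^ (-q)) ∂volume := by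
                  refine setLIntegral_congr_fun measurableSet_ball.compl
                    (fun z hz => ?_)
                  have hz2r : 2*r ≤ ‖z - z₀‖ := by
                    rw [hB] at hz
                    simp only [Set.mem_compl_iff, Metric.mem_ball, dist_eq_norm, not_lt] at hz
                    exact hz
                  have hzpos : 0 < ‖z - z₀‖ := by linarith
                  rw [ENNReal.inv_rpow, ← ENNReal.rpow_neg, ENNReal.ofReal_rpow_of_pos hzpos]
              _ = ∫⁻ w in (Metric.ball (0:ℂ) (2*r))ᶜ, ENNReal.ofReal (‖w‖ ^ (-q)) := by
                  rw [lint_sub_shift (fun w => ENNReal.ofReal (‖w‖ ^ (-q))) z₀ Bᶜ,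
                    Set.preimage_compl, hB, ball_preimage', sub_self]
              _ ≤ _ := lint_compl_rpow hq2 (by linarith)
    calc (∫⁻ z in Ω, h2 z ^ q) ^ (1/q)
        ≤ (c2 ^ q * ENNReal.ofReal ((Real.pi * (q/(q-2))) * (2*r)^(2-q)))^(1/q) :=
          ENNReal.rpow_le_rpow e2 (by positivity)
      _ = c2 * A3 := by
          rw [ENNReal.mul_rpow_of_nonneg _ _ (by positivity), ← ENNReal.rpow_mul,
            mul_one_div_cancel hq0.ne', ENNReal.rpow_one, hA3]
  calc eLpNorm (cauchyT Ω g) (ENNReal.ofReal q) (volume.restrict Ω)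
      = (∫⁻ z in Ω, (‖cauchyT Ω g z‖₊ : ℝ≥0∞) ^ q) ^ (1/q) := by
        rw [eLpNorm_eq_lintegral_rpow_enorm_toReal hqof0 ENNReal.ofReal_ne_top,
          ENNReal.toReal_ofReal hq0.le]
        simp only [enorm_eq_nnnorm]
    _ ≤ (∫⁻ z in Ω, (h1 z + h2 z) ^ q) ^ (1/q) :=
        ENNReal.rpow_le_rpow (lintegral_mono fun z => ENNReal.rpow_le_rpow (hpt z) hq0.le)
          (by positivity)
    _ ≤ (∫⁻ z in Ω, h1 z ^ q) ^ (1/q) + (∫⁻ z in Ω, h2 z ^ q) ^ (1/q) := by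
        have := ENNReal.lintegral_Lp_add_le h1m h2m hq1
        simpa using this
    _ ≤ c1 * (ENNReal.ofReal (Real.pi * (2*r)^(2:ℝ)))^(1/q) + c2 * A3 := add_le_add T1 T2
    _ = ENNReal.ofReal (Real.pi⁻¹ * (((Real.pi + Real.pi * (σ/(2-σ))) * (3*r)^(2-σ))^(1/σ) *
          (Real.pi * (2*r)^(2:ℝ))^(1/q))
        + Real.pi⁻¹ * ((2 * (Real.pi * r^(2:ℝ))^(1/σ)) *
          ((Real.pi * (q/(q-2))) * (2*r)^(2-q))^(1/q))) * N := by
        rw [hc1, hc2, hA1, hA2, hA3]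
        rw [ENNReal.ofReal_rpow_of_pos hb1, ENNReal.ofReal_rpow_of_pos hb2,
          ENNReal.ofReal_rpow_of_pos hb2', ENNReal.ofReal_rpow_of_pos hb3]
        rw [ENNReal.ofReal_add (by positivity) (by positivity)]
        rw [ENNReal.ofReal_mul (by positivity), ENNReal.ofReal_mul (by positivity),
          ENNReal.ofReal_mul (by positivity), ENNReal.ofReal_mul (by positivity),
          ENNReal.ofReal_mul (by positivity)]
        rw [ENNReal.ofReal_ofNat]
        ring

lemma const_factor {σ q r : ℝ} (hσ0 : 0 < σ) (hσ2 : σ < 2) (hq2 : 2 < q) (hr : 0 < r) :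
    Real.pi⁻¹ * (((Real.pi + Real.pi * (σ/(2-σ))) * (3*r)^(2-σ))^(1/σ) *
          (Real.pi * (2*r)^(2:ℝ))^(1/q))
        + Real.pi⁻¹ * ((2 * (Real.pi * r^(2:ℝ))^(1/σ)) *
          ((Real.pi * (q/(q-2))) * (2*r)^(2-q))^(1/q))
      = (Real.pi⁻¹ * (((Real.pi + Real.pi * (σ/(2-σ))) * 3^(2-σ))^(1/σ) *
          (Real.pi * 2^(2:ℝ))^(1/q))
        + Real.pi⁻¹ * ((2 * Real.pi^(1/σ)) *
          ((Real.pi * (q/(q-2))) * 2^(2-q))^(1/q)))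
        * r ^ (2/σ - 1 + 2/q) := by
  have hq0 : (0:ℝ) < q := by linarith
  have h2σ : (0:ℝ) < 2 - σ := by linarith
  have hcσ : (0:ℝ) ≤ Real.pi + Real.pi * (σ/(2-σ)) :=
    add_nonneg Real.pi_pos.le (mul_nonneg Real.pi_pos.le (div_nonneg hσ0.le h2σ.le))
  have hcq : (0:ℝ) ≤ Real.pi * (q/(q-2)) :=
    mul_nonneg Real.pi_pos.le (div_nonneg hq0.le (by linarith))
  have e1 : ((Real.pi + Real.pi * (σ/(2-σ))) * (3*r)^(2-σ))^(1/σ)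
      = ((Real.pi + Real.pi * (σ/(2-σ))) * 3^(2-σ))^(1/σ) * r^((2-σ)/σ) := by
    rw [Real.mul_rpow (by norm_num : (0:ℝ) ≤ 3) hr.le, ← mul_assoc,
      Real.mul_rpow (mul_nonneg hcσ (Real.rpow_nonneg (by norm_num) _))
        (Real.rpow_nonneg hr.le _),
      ← Real.rpow_mul hr.le, mul_one_div]
  have e2 : (Real.pi * (2*r)^(2:ℝ))^(1/q)
      = (Real.pi * 2^(2:ℝ))^(1/q) * r^(2/q) := by
    rw [Real.mul_rpow (by norm_num : (0:ℝ) ≤ 2) hr.le, ← mul_assoc,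
      Real.mul_rpow (mul_nonneg Real.pi_pos.le (Real.rpow_nonneg (by norm_num) _))
        (Real.rpow_nonneg hr.le _),
      ← Real.rpow_mul hr.le, mul_one_div]
  have e3 : (Real.pi * r^(2:ℝ))^(1/σ) = Real.pi^(1/σ) * r^(2/σ) := by
    rw [Real.mul_rpow Real.pi_pos.le (Real.rpow_nonneg hr.le _),
      ← Real.rpow_mul hr.le, mul_one_div]
  have e4 : ((Real.pi * (q/(q-2))) * (2*r)^(2-q))^(1/q)
      = ((Real.pi * (q/(q-2))) * 2^(2-q))^(1/q) * r^((2-q)/q) := by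
    rw [Real.mul_rpow (by norm_num : (0:ℝ) ≤ 2) hr.le, ← mul_assoc,
      Real.mul_rpow (mul_nonneg hcq (Real.rpow_nonneg (by norm_num) _))
        (Real.rpow_nonneg hr.le _),
      ← Real.rpow_mul hr.le, mul_one_div]
  rw [e1, e2, e3, e4]
  have hadd1 : r^((2-σ)/σ) * r^(2/q) = r^(2/σ - 1 + 2/q) := by
    rw [← Real.rpow_add hr, sub_div, div_self hσ0.ne']
  have hadd2 : r^(2/σ) * r^((2-q)/q) = r^(2/σ - 1 + 2/q) := by
    rw [← Real.rpow_add hr, sub_div, div_self hq0.ne']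
    ring_nf
  calc Real.pi⁻¹ * ((((Real.pi + Real.pi * (σ/(2-σ))) * 3^(2-σ))^(1/σ) * r^((2-σ)/σ)) *
        ((Real.pi * 2^(2:ℝ))^(1/q) * r^(2/q)))
      + Real.pi⁻¹ * ((2 * (Real.pi^(1/σ) * r^(2/σ))) *
        (((Real.pi * (q/(q-2))) * 2^(2-q))^(1/q) * r^((2-q)/q)))
      = Real.pi⁻¹ * (((Real.pi + Real.pi * (σ/(2-σ))) * 3^(2-σ))^(1/σ) *
          (Real.pi * 2^(2:ℝ))^(1/q)) * (r^((2-σ)/σ) * r^(2/q))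
      + Real.pi⁻¹ * ((2 * Real.pi^(1/σ)) *
          ((Real.pi * (q/(q-2))) * 2^(2-q))^(1/q)) * (r^(2/σ) * r^((2-q)/q)) := by ring
    _ = _ := by rw [hadd1, hadd2]; ring

theorem stmt_7 (Ω : Set ℂ) (hΩo : IsOpen Ω) (hΩb : Bornology.IsBounded Ω)
    (p q : ℝ) (hp₁ : 4 / 3 < p) (hp₂ : p < 2) (hq : 4 < q)
    (hpq : 1 / p ≤ 1 / 2 + 1 / q)
    (χ : ℂ → ℝ) (hχ : ContDiff ℝ (⊤ : ℕ∞) χ) (hχ01 : ∀ z, χ z ∈ Set.Icc (0 : ℝ) 1)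
    (hχ0 : ∀ z : ℂ, ‖z‖ ≤ 1 → χ z = 0)
    (hχ1 : ∀ z : ℂ, 2 ≤ ‖z‖ → χ z = 1) :
    ∃ C : ℝ, 0 < C ∧ ∀ (lam : ℝ), 1 ≤ lam → ∀ (z₀ : ℂ) (f : ℂ → ℂ),
      ContDiff ℝ (⊤ : ℕ∞) f → HasCompactSupport f → tsupport f ⊆ Ω →
      eLpNorm
          (cauchyT Ω (fun z =>
            Complex.exp (2 * Complex.I * (lam : ℂ) * (((z - z₀) ^ 2).re : ℂ)) *
              ((1 - χ ((Real.sqrt lam : ℂ) * (z - z₀)) : ℝ) : ℂ) * f z))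
          (ENNReal.ofReal q) (volume.restrict Ω)
        ≤ ENNReal.ofReal (C * lam ^ (-(1 - (1 / p - 1 / q)))) *
            W1pNorm Ω (ENNReal.ofReal p) f := by
  have hp0 : (0:ℝ) < p := by linarith
  have hp1' : (1:ℝ) ≤ p := by linarith
  have hq0 : (0:ℝ) < q := by linarith
  have hq2 : (2:ℝ) < q := by linarith
  set p' : ℝ := (1/p - 1/2)⁻¹ with hp'
  set σ : ℝ := (3/2 - 1/p)⁻¹ with hσdef
  have hip2 : 1/p < 3/4 := by
    rw [div_lt_div_iff₀ hp0 (by norm_num)]; linarith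
  have hip3 : (1:ℝ)/2 < 1/p := by
    rw [div_lt_div_iff₀ (by norm_num) hp0]; linarith
  have hbase : (0:ℝ) < 3/2 - 1/p := by linarith
  have hσinv : σ⁻¹ = 3/2 - 1/p := by rw [hσdef, inv_inv]
  have hσ0 : 0 < σ := by rw [hσdef]; exact inv_pos.2 hbase
  have hσ2 : σ < 2 := by
    rw [hσdef, show (2:ℝ) = (2⁻¹)⁻¹ by norm_num]
    exact inv_strictAnti₀ (by norm_num) (by linarith)
  have hpσ : Real.HolderConjugate p' σ := by
    rw [Real.holderConjugate_iff]
    constructor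
    · rw [hp']
      exact (one_lt_inv₀ (by linarith)).2 (by linarith)
    · rw [hp', inv_inv, hσinv]; ring
  obtain ⟨Cg, hCg0, hCg⟩ := sobolev_step Ω hp1' hp₂ hp'
  set e : ℝ := 2/σ - 1 + 2/q with he
  set β : ℝ := 1 - (1/p - 1/q) with hβ
  have heβ : e = 2 * β := by
    rw [he, hβ, div_eq_mul_inv 2 σ, hσinv]; ring
  set K : ℝ := Real.pi⁻¹ * (((Real.pi + Real.pi * (σ/(2-σ))) * 3^(2-σ))^(1/σ) *
        (Real.pi * 2^(2:ℝ))^(1/q))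
      + Real.pi⁻¹ * ((2 * Real.pi^(1/σ)) *
        ((Real.pi * (q/(q-2))) * 2^(2-q))^(1/q)) with hK
  have hKnn : 0 ≤ K := by
    have h2σ : (0:ℝ) < 2 - σ := by linarith
    have hcσ : (0:ℝ) ≤ Real.pi + Real.pi * (σ/(2-σ)) :=
      add_nonneg Real.pi_pos.le (mul_nonneg Real.pi_pos.le (div_nonneg hσ0.le h2σ.le))
    have hcq : (0:ℝ) ≤ Real.pi * (q/(q-2)) :=
      mul_nonneg Real.pi_pos.le (div_nonneg hq0.le (by linarith))
    rw [hK]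
    have i1 : (0:ℝ) ≤ Real.pi⁻¹ := by positivity
    refine add_nonneg (mul_nonneg i1 (mul_nonneg ?_ ?_)) (mul_nonneg i1 (mul_nonneg ?_ ?_))
    · exact Real.rpow_nonneg (mul_nonneg hcσ (Real.rpow_nonneg (by norm_num) _)) _
    · exact Real.rpow_nonneg (mul_nonneg Real.pi_pos.le (Real.rpow_nonneg (by norm_num) _)) _
    · exact mul_nonneg (by norm_num) (Real.rpow_nonneg Real.pi_pos.le _)
    · exact Real.rpow_nonneg (mul_nonneg hcq (Real.rpow_nonneg (by norm_num) _)) _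
  refine ⟨K * 2^e * Cg + 1, by positivity, fun lam hlam z₀ f hf hfc hfs => ?_⟩
  have hlam0 : (0:ℝ) < lam := by linarith
  have hsq : 0 < Real.sqrt lam := Real.sqrt_pos.2 hlam0
  set r : ℝ := 2 / Real.sqrt lam with hrdef
  have hr : 0 < r := by positivity
  -- pointwise support bound for g
  have hgf : ∀ ζ : ℂ, (‖Complex.exp (2 * Complex.I * (lam : ℂ) * (((ζ - z₀) ^ 2).re : ℂ)) *
        ((1 - χ ((Real.sqrt lam : ℂ) * (ζ - z₀)) : ℝ) : ℂ) * f ζ‖₊ : ℝ≥0∞) ≤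
      (Metric.closedBall z₀ r).indicator (fun ζ => ((‖f ζ‖₊ : ℝ≥0∞))) ζ := by
    intro ζ
    by_cases hζ : ζ ∈ Metric.closedBall z₀ r
    · rw [Set.indicator_of_mem hζ]
      refine ENNReal.coe_le_coe.2 ?_
      rw [← NNReal.coe_le_coe, coe_nnnorm, coe_nnnorm]
      have h1 : ‖Complex.exp (2 * Complex.I * (lam : ℂ) * (((ζ - z₀) ^ 2).re : ℂ))‖ = 1 := by
        rw [Complex.norm_exp]
        have : (2 * Complex.I * (lam : ℂ) * ((((ζ - z₀) ^ 2).re : ℝ) : ℂ)).re = 0 := by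
          simp [Complex.mul_re, Complex.mul_im]
        rw [this, Real.exp_zero]
      have h2 : ‖((1 - χ ((Real.sqrt lam : ℂ) * (ζ - z₀)) : ℝ) : ℂ)‖ ≤ 1 := by
        rw [Complex.norm_real, Real.norm_eq_abs]
        obtain ⟨hl, hu⟩ := hχ01 ((Real.sqrt lam : ℂ) * (ζ - z₀))
        rw [abs_le]
        constructor <;> linarith
      rw [norm_mul, norm_mul, h1, one_mul]
      exact mul_le_of_le_one_left (norm_nonneg _) h2
    · rw [Set.indicator_of_notMem hζ]
      have hfar : r < ‖ζ - z₀‖ := by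
        rw [Metric.mem_closedBall, dist_eq_norm, not_le] at hζ
        exact hζ
      have habs : 2 ≤ ‖(Real.sqrt lam : ℂ) * (ζ - z₀)‖ := by
        rw [norm_mul, Complex.norm_real, Real.norm_eq_abs, abs_of_pos hsq]
        calc (2:ℝ) = Real.sqrt lam * r := by
              rw [hrdef]; field_simp
          _ ≤ Real.sqrt lam * ‖ζ - z₀‖ := by
              exact mul_le_mul_of_nonneg_left hfar.le hsq.le
      rw [hχ1 _ habs]
      norm_num
  have hcore := core_bound Ω hpσ hσ2 hq2 hr z₀ (hf.continuous) hgf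
  have hsob := hCg f hf hfc hfs
  have hrpow : r ^ e = 2^e * lam ^ (-β) := by
    rw [hrdef, Real.div_rpow (by norm_num) hsq.le, Real.sqrt_eq_rpow,
      ← Real.rpow_mul hlam0.le, div_eq_mul_inv, ← Real.rpow_neg hlam0.le, heβ]
    ring_nf
  calc eLpNorm _ (ENNReal.ofReal q) (volume.restrict Ω)
      ≤ ENNReal.ofReal (Real.pi⁻¹ * (((Real.pi + Real.pi * (σ/(2-σ))) * (3*r)^(2-σ))^(1/σ) *
          (Real.pi * (2*r)^(2:ℝ))^(1/q))
        + Real.pi⁻¹ * ((2 * (Real.pi * r^(2:ℝ))^(1/σ)) *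
          ((Real.pi * (q/(q-2))) * (2*r)^(2-q))^(1/q)))
        * eLpNorm f (ENNReal.ofReal p') volume := hcore
    _ = ENNReal.ofReal (K * (2^e * lam ^ (-β))) * eLpNorm f (ENNReal.ofReal p') volume := by
        rw [const_factor hσ0 hσ2 hq2 hr, ← hK, ← he, hrpow]
    _ ≤ ENNReal.ofReal (K * (2^e * lam ^ (-β))) *
        (ENNReal.ofReal Cg * W1pNorm Ω (ENNReal.ofReal p) f) := mul_le_mul_right hsob _
    _ = ENNReal.ofReal ((K * 2^e * Cg) * lam ^ (-β)) * W1pNorm Ω (ENNReal.ofReal p) f := by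
        rw [← mul_assoc, ← ENNReal.ofReal_mul (by positivity)]
        ring_nf
    _ ≤ ENNReal.ofReal ((K * 2^e * Cg + 1) * lam ^ (-β)) * W1pNorm Ω (ENNReal.ofReal p) f := by
        refine mul_le_mul_left (ENNReal.ofReal_le_ofReal ?_) _
        refine mul_le_mul_of_nonneg_right (by linarith) (Real.rpow_nonneg hlam0.le _)
    _ = ENNReal.ofReal ((K * 2^e * Cg + 1) * lam ^ (-(1 - (1 / p - 1 / q)))) *
        W1pNorm Ω (ENNReal.ofReal p) f := by rw [hβ]
end

section
/- Let Ω ⊂ ℂ be a bounded open set, let k : ℂ × ℂ → ℂ be smooth with compact support, and define the integral operator (Kf)(z) := ∫_ℂ k(z, ζ) f(ζ) dA(ζ). Let r ∈ (2, ∞). Then there exists a constant C > 0, depending only on Ω, r, k, such that for every λ ≥ 1, every z₀ ∈ ℂ, and every smooth compactly supported f : ℂ → ℂ with support contained in Ω, one has ‖K( e^{2iλ·Re((·−z₀)²)} f )‖_{L^∞(ℂ)} ≤ C · λ^{−1/r} · ‖f‖_{W^{1,r}(Ω)}. -/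
open MeasureTheory Complex
open scoped ENNReal

/-- Integral operator with kernel `k`: `(Kf)(z) = ∫_ℂ k(z, ζ) f(ζ) dA(ζ)`. -/
noncomputable def kernelOp (k : ℂ × ℂ → ℂ) (f : ℂ → ℂ) (z : ℂ) : ℂ :=
  ∫ ζ, k (z, ζ) * f ζ

open intervalIntegral

lemma osc_side (lam δ x₀ : ℝ) (hlam : 1 ≤ lam) (hδ : 0 < δ)
    (h h' : ℝ → ℂ) (hder : ∀ x, HasDerivAt h (h' x) x) (hc' : Continuous h')
    (D : ℝ) (hsup : ∀ x, ‖h x‖ ≤ D)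
    (q : ℝ) (hq : x₀ + δ ≤ q) (hq0 : h q = 0)
    (hD' : ∫ x in (x₀ + δ)..q, ‖h' x‖ ≤ D) :
    ‖∫ x in (x₀ + δ)..q, h x * Complex.exp (((2 * lam * (x - x₀)^2 : ℝ) : ℂ) * Complex.I)‖
      ≤ 3 * D / (4 * lam * δ) := by
  have hlam0 : (0:ℝ) < lam := lt_of_lt_of_le one_pos hlam
  set p := x₀ + δ with hp
  have hD0 : 0 ≤ D := le_trans (norm_nonneg _) (hsup 0)
  have hmem : ∀ x ∈ Set.uIcc p q, δ ≤ x - x₀ := by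
    intro x hx
    rw [Set.uIcc_of_le hq] at hx
    have := hx.1; simp only [hp] at this; linarith
  have hnea : ∀ x ∈ Set.uIcc p q, ((x:ℂ) - (x₀:ℂ)) ≠ 0 := by
    intro x hx
    have h1 : δ ≤ x - x₀ := hmem x hx
    have : x ≠ x₀ := by intro hxx; rw [hxx] at h1; simp at h1; linarith
    exact sub_ne_zero.mpr (by exact_mod_cast this)
  set e : ℝ → ℂ := fun x => Complex.exp (((2 * lam * (x - x₀)^2 : ℝ) : ℂ) * Complex.I) with he
  have hnorme : ∀ x, ‖e x‖ = 1 := by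
    intro x
    rw [he]; rw [Complex.norm_exp]
    norm_num
    right
    simp [pow_two]
  set u : ℝ → ℂ := fun x => (4*(lam:ℂ)*Complex.I)⁻¹ * (h x / ((x:ℂ) - (x₀:ℂ))) with hu
  set u' : ℝ → ℂ := fun x =>
    (4*(lam:ℂ)*Complex.I)⁻¹ * ((h' x * ((x:ℂ) - (x₀:ℂ)) - h x * 1) / ((x:ℂ) - (x₀:ℂ))^2) with hu'
  set v' : ℝ → ℂ := fun x => e x * (((4 * lam * (x - x₀) : ℝ) : ℂ) * Complex.I) with hv'
  have hvd : ∀ x : ℝ, HasDerivAt e (v' x) x := by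
    intro x
    have hc : HasDerivAt (fun x : ℝ => (2 * lam * (x - x₀)^2 : ℝ)) (4 * lam * (x - x₀)) x := by
      have h1 : HasDerivAt (fun x : ℝ => x - x₀) 1 x := (hasDerivAt_id x).sub_const x₀
      have h2 := ((h1.pow 2).const_mul (2 * lam))
      refine h2.congr_deriv ?_; norm_num; ring
    have hw : HasDerivAt (fun x : ℝ => (((2 * lam * (x - x₀)^2 : ℝ):ℂ) * Complex.I))
        (((4 * lam * (x - x₀) : ℝ) : ℂ) * Complex.I) x := (hc.ofReal_comp).mul_const Complex.I
    simpa [he, hv'] using hw.cexp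
  have hqd : ∀ x : ℝ, HasDerivAt (fun x : ℝ => ((x:ℂ) - (x₀:ℂ))) 1 x := by
    intro x
    simpa using (Complex.ofRealCLM.hasDerivAt (x := x)).sub_const (x₀:ℂ)
  have hud : ∀ x ∈ Set.uIcc p q, HasDerivAt u (u' x) x := by
    intro x hx
    exact ((hder x).div (hqd x) (hnea x hx)).const_mul _
  have hcongr : ∀ x ∈ Set.uIcc p q, h x * e x = u x * v' x := by
    intro x hx
    have hne := hnea x hx
    have hlamne : (lam : ℂ) ≠ 0 := by
      simp only [ne_eq, Complex.ofReal_eq_zero]; positivity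
    have h1 : (((4*lam*(x-x₀):ℝ):ℂ) * Complex.I) * ((4*(lam:ℂ)*Complex.I)⁻¹ * ((x:ℂ)-(x₀:ℂ))⁻¹) = 1 := by
      push_cast
      field_simp
    have h2 : u x * v' x = h x * e x *
        ((((4*lam*(x-x₀):ℝ):ℂ) * Complex.I) * ((4*(lam:ℂ)*Complex.I)⁻¹ * ((x:ℂ)-(x₀:ℂ))⁻¹)) := by
      simp only [hu, hv', div_eq_mul_inv]; ring
    rw [h2, h1, mul_one]
  have hcont_h : Continuous h := by
    have : Differentiable ℝ h := fun x => (hder x).differentiableAt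
    exact this.continuous
  have hcontQ : Continuous (fun x : ℝ => ((x:ℂ) - (x₀:ℂ))) :=
    Complex.continuous_ofReal.sub continuous_const
  have hconte : Continuous e := by
    apply Complex.continuous_exp.comp
    exact (Complex.continuous_ofReal.comp
      ((continuous_const.mul (((continuous_id.sub continuous_const)).pow 2)))).mul continuous_const
  have hcontv' : Continuous v' := by
    apply hconte.mul
    exact (Complex.continuous_ofReal.comp
      (continuous_const.mul (continuous_id.sub continuous_const))).mul continuous_const
  have hcontu' : ContinuousOn u' (Set.uIcc p q) := by
    apply ContinuousOn.mul continuousOn_const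
    apply ContinuousOn.div
    · exact ((hc'.mul hcontQ).sub (hcont_h.mul continuous_const)).continuousOn
    · exact (hcontQ.pow 2).continuousOn
    · intro x hx; exact pow_ne_zero 2 (hnea x hx)
  have hIBP : ∫ x in p..q, u x * v' x
      = u q * e q - u p * e p - ∫ x in p..q, u' x * e x := by
    apply integral_mul_deriv_eq_deriv_mul hud (fun x _ => hvd x)
    · exact hcontu'.intervalIntegrable
    · exact hcontv'.intervalIntegrable _ _
  have hinv4 : ‖(4*(lam:ℂ)*Complex.I)⁻¹‖ = (4*lam)⁻¹ := by
    rw [norm_inv]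
    simp [norm_mul, Complex.norm_real, abs_of_pos hlam0]
  have huq : u q = 0 := by simp [hu, hq0]
  have hup : ‖u p‖ ≤ D / (4*lam*δ) := by
    have hpx : (p:ℝ) - x₀ = δ := by simp [hp]
    have heq : ‖u p‖ = (4*lam)⁻¹ * (‖h p‖ / δ) := by
      rw [hu]
      rw [norm_mul, hinv4, norm_div]
      congr 2
      rw [show ((p:ℂ) - (x₀:ℂ)) = ((p - x₀ : ℝ) : ℂ) by push_cast; ring]
      rw [Complex.norm_real, hpx, Real.norm_of_nonneg hδ.le]
    rw [heq]
    calc (4*lam)⁻¹ * (‖h p‖ / δ) ≤ (4*lam)⁻¹ * (D / δ) := by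
          gcongr
          exact hsup p
      _ = D / (4*lam*δ) := by field_simp
  -- bound on ‖u' x‖
  have hu'bound : ∀ x ∈ Set.uIcc p q,
      ‖u' x‖ ≤ (4*lam*δ)⁻¹ * ‖h' x‖ + (D/(4*lam)) * ((x - x₀)^2)⁻¹ := by
    intro x hx
    have hX : δ ≤ x - x₀ := hmem x hx
    have hX0 : (0:ℝ) < x - x₀ := lt_of_lt_of_le hδ hX
    have hnormX : ‖((x:ℂ) - (x₀:ℂ))‖ = x - x₀ := by
      rw [show ((x:ℂ) - (x₀:ℂ)) = ((x - x₀ : ℝ) : ℂ) by push_cast; ring,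
        Complex.norm_real, Real.norm_of_nonneg hX0.le]
    have h1 : ‖u' x‖ = (4*lam)⁻¹ * (‖h' x * ((x:ℂ) - (x₀:ℂ)) - h x * 1‖ / (x - x₀)^2) := by
      rw [hu', norm_mul, hinv4, norm_div, norm_pow, hnormX]
    rw [h1]
    have h2 : ‖h' x * ((x:ℂ) - (x₀:ℂ)) - h x * 1‖ ≤ ‖h' x‖ * (x - x₀) + D := by
      calc ‖h' x * ((x:ℂ) - (x₀:ℂ)) - h x * 1‖ ≤ ‖h' x * ((x:ℂ) - (x₀:ℂ))‖ + ‖h x * 1‖ :=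
            norm_sub_le _ _
      _ ≤ ‖h' x‖ * (x - x₀) + D := by
            rw [norm_mul, hnormX, norm_mul, norm_one, mul_one]
            exact add_le_add le_rfl (hsup x)
    calc (4*lam)⁻¹ * (‖h' x * ((x:ℂ) - (x₀:ℂ)) - h x * 1‖ / (x - x₀)^2)
        ≤ (4*lam)⁻¹ * ((‖h' x‖ * (x - x₀) + D) / (x - x₀)^2) := by
          apply mul_le_mul_of_nonneg_left _ (by positivity)
          exact div_le_div_of_nonneg_right h2 (by positivity)
      _ = (4*lam)⁻¹ * (‖h' x‖ / (x - x₀)) + (D/(4*lam)) * ((x - x₀)^2)⁻¹ := by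
          field_simp
      _ ≤ (4*lam*δ)⁻¹ * ‖h' x‖ + (D/(4*lam)) * ((x - x₀)^2)⁻¹ := by
          apply add_le_add _ le_rfl
          calc (4*lam)⁻¹ * (‖h' x‖ / (x - x₀)) ≤ (4*lam)⁻¹ * (‖h' x‖ / δ) := by
                gcongr
            _ = (4*lam*δ)⁻¹ * ‖h' x‖ := by field_simp
  -- integral of (x-x₀)⁻²
  have hinv2int : ∫ x in p..q, ((x - x₀)^2)⁻¹ ≤ δ⁻¹ := by
    have hF : ∀ x ∈ Set.uIcc p q, HasDerivAt (fun y : ℝ => -(y - x₀)⁻¹) (((x - x₀)^2)⁻¹) x := by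
      intro x hx
      have hX0 : (0:ℝ) < x - x₀ := lt_of_lt_of_le hδ (hmem x hx)
      have := (((hasDerivAt_id x).sub_const x₀).inv (ne_of_gt hX0)).neg
      refine this.congr_deriv ?_
      simp only [id]; rw [neg_div, neg_neg, one_div]
    have hcont2 : ContinuousOn (fun x : ℝ => ((x - x₀)^2)⁻¹) (Set.uIcc p q) := by
      apply ContinuousOn.inv₀ (((continuous_id.sub continuous_const).pow 2).continuousOn)
      intro x hx
      have hX0 : (0:ℝ) < x - x₀ := lt_of_lt_of_le hδ (hmem x hx)
      exact pow_ne_zero 2 hX0.ne'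
    rw [integral_eq_sub_of_hasDerivAt hF hcont2.intervalIntegrable]
    have hq0' : (0:ℝ) < q - x₀ := lt_of_lt_of_le hδ (hmem q Set.right_mem_uIcc)
    have hpx : (p:ℝ) - x₀ = δ := by simp [hp]
    rw [hpx]
    have : (0:ℝ) < (q - x₀)⁻¹ := by positivity
    linarith
  have hu'int : ∫ x in p..q, ‖u' x‖ ≤ D/(4*lam*δ) + (D/(4*lam)) * δ⁻¹ := by
    have hc1 : IntervalIntegrable (fun x => ‖u' x‖) volume p q :=
      hcontu'.norm.intervalIntegrable
    have hc2a : IntervalIntegrable (fun x => (4*lam*δ)⁻¹ * ‖h' x‖) volume p q :=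
      (continuous_const.mul hc'.norm).intervalIntegrable _ _
    have hc2b : IntervalIntegrable (fun x : ℝ => (D/(4*lam)) * ((x - x₀)^2)⁻¹) volume p q := by
      apply IntervalIntegrable.const_mul
      apply ContinuousOn.intervalIntegrable
      apply ContinuousOn.inv₀ (((continuous_id.sub continuous_const).pow 2).continuousOn)
      intro x hx
      have hX0 : (0:ℝ) < x - x₀ := lt_of_lt_of_le hδ (hmem x hx)
      exact pow_ne_zero 2 hX0.ne'
    calc ∫ x in p..q, ‖u' x‖
        ≤ ∫ x in p..q, ((4*lam*δ)⁻¹ * ‖h' x‖ + (D/(4*lam)) * ((x - x₀)^2)⁻¹) := by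
          apply integral_mono_on hq hc1 (hc2a.add hc2b)
          intro x hx
          exact hu'bound x (by rw [Set.uIcc_of_le hq]; exact hx)
      _ = (4*lam*δ)⁻¹ * (∫ x in p..q, ‖h' x‖) + (D/(4*lam)) * ∫ x in p..q, ((x - x₀)^2)⁻¹ := by
          rw [integral_add hc2a hc2b, intervalIntegral.integral_const_mul, intervalIntegral.integral_const_mul]
      _ ≤ D/(4*lam*δ) + (D/(4*lam)) * δ⁻¹ := by
          apply add_le_add
          · calc (4*lam*δ)⁻¹ * (∫ x in p..q, ‖h' x‖) ≤ (4*lam*δ)⁻¹ * D :=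
                  mul_le_mul_of_nonneg_left hD' (by positivity)
              _ = D/(4*lam*δ) := by rw [inv_mul_eq_div]
          · exact mul_le_mul_of_nonneg_left hinv2int (by positivity)
  -- put it together
  calc ‖∫ x in p..q, h x * e x‖ = ‖∫ x in p..q, u x * v' x‖ := by
        rw [integral_congr hcongr]
    _ = ‖u q * e q - u p * e p - ∫ x in p..q, u' x * e x‖ := by rw [hIBP]
    _ ≤ ‖u p * e p‖ + ‖∫ x in p..q, u' x * e x‖ := by
        rw [huq, zero_mul, zero_sub]
        calc ‖-(u p * e p) - ∫ x in p..q, u' x * e x‖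
            ≤ ‖-(u p * e p)‖ + ‖∫ x in p..q, u' x * e x‖ := norm_sub_le _ _
          _ = ‖u p * e p‖ + ‖∫ x in p..q, u' x * e x‖ := by rw [norm_neg]
    _ ≤ D/(4*lam*δ) + (D/(4*lam*δ) + (D/(4*lam)) * δ⁻¹) := by
        apply add_le_add
        · rw [norm_mul, hnorme, mul_one]; exact hup
        · calc ‖∫ x in p..q, u' x * e x‖ ≤ ∫ x in p..q, ‖u' x * e x‖ :=
                norm_integral_le_integral_norm hq
            _ = ∫ x in p..q, ‖u' x‖ := by
                apply integral_congr
                intro x _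
                show ‖u' x * e x‖ = ‖u' x‖
                rw [norm_mul, hnorme, mul_one]
            _ ≤ D/(4*lam*δ) + (D/(4*lam)) * δ⁻¹ := hu'int
    _ = 3 * D / (4 * lam * δ) := by field_simp; ring

lemma osc_line (lam x₀ : ℝ) (hlam : 1 ≤ lam) (h h' : ℝ → ℂ)
    (hder : ∀ x, HasDerivAt h (h' x) x) (hc' : Continuous h')
    (X : ℝ) (hsupp : ∀ x, X ≤ |x| → h x = 0) :
    ‖∫ x : ℝ, h x * Complex.exp (((2 * lam * (x - x₀)^2 : ℝ) : ℂ) * Complex.I)‖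
      ≤ 4 * lam ^ (-(1/2) : ℝ) * ∫ x : ℝ, ‖h' x‖ := by
  have hlam0 : (0:ℝ) < lam := lt_of_lt_of_le one_pos hlam
  set X' : ℝ := |X| + 1 with hX'
  have hsupp' : ∀ x, X' ≤ |x| → h x = 0 := by
    intro x hx
    exact hsupp x (le_trans (le_trans (le_abs_self X) (by rw [hX']; linarith)) hx)
  set δ : ℝ := lam ^ (-(1/2) : ℝ) with hδdef
  have hδ0 : 0 < δ := Real.rpow_pos_of_pos hlam0 _
  have hδ1 : δ ≤ 1 := Real.rpow_le_one_of_one_le_of_nonpos hlam (by norm_num)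
  set e : ℝ → ℂ := fun x => Complex.exp (((2 * lam * (x - x₀)^2 : ℝ) : ℂ) * Complex.I) with he
  have hnorme : ∀ x, ‖e x‖ = 1 := by
    intro x
    rw [he, Complex.norm_exp]
    norm_num
    right
    simp [pow_two]
  have hcont_h : Continuous h := by
    have : Differentiable ℝ h := fun x => (hder x).differentiableAt
    exact this.continuous
  have hconte : Continuous e := by
    apply Complex.continuous_exp.comp
    exact (Complex.continuous_ofReal.comp
      ((continuous_const.mul (((continuous_id.sub continuous_const)).pow 2)))).mul continuous_const
  -- h' vanishes outside [-X', X']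
  have h'supp : ∀ x, X' < |x| → h' x = 0 := by
    intro x hx
    have hopen : IsOpen {y : ℝ | X' < |y|} := isOpen_lt continuous_const continuous_abs
    have hev : (fun _ : ℝ => (0:ℂ)) =ᶠ[nhds x] h := by
      filter_upwards [hopen.mem_nhds hx] with y hy
      exact (hsupp' y (le_of_lt hy)).symm
    have h1 : HasDerivAt (fun _ : ℝ => (0:ℂ)) (h' x) x :=
      (hder x).congr_of_eventuallyEq hev
    have h2 : HasDerivAt (fun _ : ℝ => (0:ℂ)) 0 x := hasDerivAt_const x 0
    exact (h1.unique h2)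
  have hint' : Integrable h' := by
    apply hc'.integrable_of_hasCompactSupport
    apply HasCompactSupport.intro (isCompact_Icc (a := -X') (b := X'))
    intro x hx
    apply h'supp
    simp only [Set.mem_Icc, not_and_or, not_le] at hx
    rcases hx with hx | hx
    · rw [lt_abs]; right; linarith
    · rw [lt_abs]; left; exact hx
  set D : ℝ := ∫ x : ℝ, ‖h' x‖ with hD
  have hD0 : 0 ≤ D := integral_nonneg (fun x => norm_nonneg _)
  have hintnorm : Integrable (fun x => ‖h' x‖) := hint'.norm
  -- sup bound
  have hsubint : ∀ s t : ℝ, s ≤ t → ∫ x in s..t, ‖h' x‖ ≤ D := by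
    intro s t hst
    rw [intervalIntegral.integral_of_le hst]
    exact setIntegral_le_integral hintnorm (Filter.Eventually.of_forall (fun x => norm_nonneg _))
  have hsup : ∀ x, ‖h x‖ ≤ D := by
    intro x
    set a : ℝ := -(X' + |x| + 1) with ha
    have hax : a ≤ x := by
      have h1 : -|x| ≤ x := neg_abs_le x
      have h2 : 0 ≤ |X| := abs_nonneg X
      simp only [ha, hX'] at *
      linarith
    have ha0 : h a = 0 := by
      apply hsupp'
      rw [le_abs]; right
      simp only [ha]
      have h2 : 0 ≤ |x| := abs_nonneg x
      linarith
    have hfc : ∫ t in a..x, h' t = h x - h a :=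
      intervalIntegral.integral_eq_sub_of_hasDerivAt (fun t _ => hder t)
        (hc'.intervalIntegrable a x)
    rw [ha0, sub_zero] at hfc
    rw [← hfc]
    calc ‖∫ t in a..x, h' t‖ ≤ ∫ t in a..x, ‖h' t‖ :=
          intervalIntegral.norm_integral_le_integral_norm hax
      _ ≤ D := hsubint a x hax
  -- the integrand
  set g : ℝ → ℂ := fun x => h x * e x with hg
  have hcg : Continuous g := hcont_h.mul hconte
  set b : ℝ := X' + |x₀| + 1 with hb
  have hX'0 : 0 < X' := by rw [hX']; positivity
  have hab1 : -b ≤ x₀ - δ := by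
    have := neg_abs_le x₀
    simp only [hb]
    linarith
  have hab2 : x₀ + δ ≤ b := by
    have := le_abs_self x₀
    simp only [hb]
    linarith
  have hgsupp : Function.support g ⊆ Set.Ioc (-b) b := by
    intro x hx
    rw [Function.mem_support] at hx
    have hxX : |x| < X' := by
      by_contra hcon
      push_neg at hcon
      exact hx (by rw [hg]; simp only []; rw [hsupp' x hcon, zero_mul])
    rw [abs_lt] at hxX
    constructor
    · have := abs_nonneg x₀; simp only [hb]; linarith
    · have := abs_nonneg x₀; simp only [hb]; linarith
  have hwhole : ∫ x in (-b)..b, g x = ∫ x : ℝ, g x :=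
    intervalIntegral.integral_eq_integral_of_support_subset hgsupp
  -- split
  have hii : ∀ s t : ℝ, IntervalIntegrable g volume s t := fun s t => hcg.intervalIntegrable s t
  have hsplit : ∫ x in (-b)..b, g x
      = (∫ x in (-b)..(x₀ - δ), g x) + (∫ x in (x₀-δ)..(x₀+δ), g x) + ∫ x in (x₀+δ)..b, g x := by
    rw [intervalIntegral.integral_add_adjacent_intervals (hii _ _) (hii _ _),
      intervalIntegral.integral_add_adjacent_intervals (hii _ _) (hii _ _)]
  -- middle piece
  have hmid : ‖∫ x in (x₀-δ)..(x₀+δ), g x‖ ≤ D * (2*δ) := by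
    have := intervalIntegral.norm_integral_le_of_norm_le_const (C := D)
      (f := g) (a := x₀-δ) (b := x₀+δ) (fun x _ => by
        rw [hg]; simp only []; rw [norm_mul, hnorme, mul_one]; exact hsup x)
    calc ‖∫ x in (x₀-δ)..(x₀+δ), g x‖ ≤ D * |(x₀+δ) - (x₀-δ)| := this
      _ = D * (2*δ) := by rw [show (x₀+δ) - (x₀-δ) = 2*δ by ring, abs_of_pos (by linarith)]
  -- right piece
  have hright : ‖∫ x in (x₀+δ)..b, g x‖ ≤ 3 * D / (4 * lam * δ) := by
    apply osc_side lam δ x₀ hlam hδ0 h h' hder hc' D hsup b hab2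
    · apply hsupp'
      rw [le_abs]; left
      have := abs_nonneg x₀; simp only [hb]; linarith
    · exact hsubint _ _ hab2
  -- left piece by reflection
  have hleft : ‖∫ x in (-b)..(x₀-δ), g x‖ ≤ 3 * D / (4 * lam * δ) := by
    have hrefl : ∫ y in (x₀+δ)..(2*x₀+b), g (2*x₀ - y) = ∫ x in (-b)..(x₀-δ), g x := by
      rw [intervalIntegral.integral_comp_sub_left g (2*x₀)]
      congr 1 <;> ring
    rw [← hrefl]
    set ht : ℝ → ℂ := fun y => h (2*x₀ - y) with hht
    set ht' : ℝ → ℂ := fun y => -(h' (2*x₀ - y)) with hht'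
    have htder : ∀ y, HasDerivAt ht (ht' y) y := fun y =>
      HasDerivAt.comp_const_sub (2*x₀) y (hder (2*x₀ - y))
    have htc' : Continuous ht' :=
      ((hc'.comp (continuous_const.sub continuous_id))).neg
    have htsup : ∀ y, ‖ht y‖ ≤ D := fun y => hsup _
    have hcongr2 : ∀ y ∈ Set.uIcc (x₀+δ) (2*x₀+b), g (2*x₀ - y) = ht y * e y := by
      intro y _
      show h (2*x₀ - y) * e (2*x₀ - y) = h (2*x₀ - y) * e y
      congr 1
      simp only [he]
      congr 3
      ring
    rw [intervalIntegral.integral_congr hcongr2]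
    have hq2 : x₀ + δ ≤ 2*x₀+b := by
      have := neg_abs_le x₀; simp only [hb]; linarith
    apply osc_side lam δ x₀ hlam hδ0 ht ht' htder htc' D htsup _ hq2
    · rw [hht]
      simp only []
      rw [show 2*x₀ - (2*x₀+b) = -b by ring]
      apply hsupp'
      rw [le_abs]; right
      have := abs_nonneg x₀; simp only [hb]; linarith
    · have : ∀ y ∈ Set.uIcc (x₀+δ) (2*x₀+b), ‖ht' y‖ = (fun t => ‖h' t‖) (2*x₀ - y) := by
        intro y _
        rw [hht']
        simp
      rw [intervalIntegral.integral_congr this,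
        intervalIntegral.integral_comp_sub_left (fun t => ‖h' t‖) (2*x₀)]
      have h1 : 2*x₀ - (2*x₀+b) = -b := by ring
      have h2 : 2*x₀ - (x₀+δ) = x₀ - δ := by ring
      rw [h1, h2]
      exact hsubint _ _ (by linarith)
  -- combine
  have hkey : lam * (δ * δ) = 1 := by
    have h1 : δ * δ = lam ^ (-(1:ℝ)) := by
      rw [hδdef, ← Real.rpow_add hlam0]
      norm_num
    rw [h1, Real.rpow_neg_one, mul_inv_cancel₀ (ne_of_gt hlam0)]
  have hld : 4 * lam * δ = 4 / δ := by
    rw [eq_div_iff (ne_of_gt hδ0)]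
    nlinarith [hkey]
  calc ‖∫ x : ℝ, g x‖ = ‖(∫ x in (-b)..(x₀ - δ), g x) + (∫ x in (x₀-δ)..(x₀+δ), g x)
        + ∫ x in (x₀+δ)..b, g x‖ := by rw [← hwhole, hsplit]
    _ ≤ ‖(∫ x in (-b)..(x₀ - δ), g x) + (∫ x in (x₀-δ)..(x₀+δ), g x)‖
        + ‖∫ x in (x₀+δ)..b, g x‖ := norm_add_le _ _
    _ ≤ (‖∫ x in (-b)..(x₀ - δ), g x‖ + ‖∫ x in (x₀-δ)..(x₀+δ), g x‖)
        + ‖∫ x in (x₀+δ)..b, g x‖ := by gcongr; exact norm_add_le _ _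
    _ ≤ (3 * D / (4 * lam * δ) + D * (2*δ)) + 3 * D / (4 * lam * δ) := by
        gcongr
    _ = (7/2) * δ * D := by rw [hld]; field_simp; ring
    _ ≤ 4 * δ * D := by nlinarith

lemma hcs_comp {E : Type*} [NormedAddCommGroup E] (F : ℂ → E) (hF : HasCompactSupport F) :
    HasCompactSupport (fun p : ℝ × ℝ => F (p.1 + p.2*Complex.I)) := by
  obtain ⟨R, hR⟩ := hF.isBounded.subset_closedBall 0
  apply HasCompactSupport.intro (K := Set.Icc (-R) R ×ˢ Set.Icc (-R) R)
    ((isCompact_Icc).prod (isCompact_Icc))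
  intro p hp
  apply image_eq_zero_of_notMem_tsupport
  intro hmem
  apply hp
  have := hR hmem
  rw [Metric.mem_closedBall, dist_zero_right] at this
  have hre : |p.1| ≤ R := by
    have h1 : |(p.1 + p.2*Complex.I : ℂ).re| ≤ ‖(p.1 + p.2*Complex.I : ℂ)‖ :=
      Complex.abs_re_le_norm _
    simp only [Complex.add_re, Complex.ofReal_re, Complex.mul_re, Complex.ofReal_im,
      Complex.I_re, Complex.I_im] at h1
    simpa using le_trans (by simpa using h1) this
  have him : |p.2| ≤ R := by
    have h1 : |(p.1 + p.2*Complex.I : ℂ).im| ≤ ‖(p.1 + p.2*Complex.I : ℂ)‖ :=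
      Complex.abs_im_le_norm _
    simp only [Complex.add_im, Complex.ofReal_im, Complex.mul_im, Complex.ofReal_re,
      Complex.I_re, Complex.I_im] at h1
    simpa using le_trans (by simpa using h1) this
  constructor
  · rw [Set.mem_Icc]; rw [abs_le] at hre; exact hre
  · rw [Set.mem_Icc]; rw [abs_le] at him; exact him

lemma integral_complex_eq_prod {E : Type*} [NormedAddCommGroup E] [NormedSpace ℝ E]
    (F : ℂ → E) :
    ∫ ζ : ℂ, F ζ = ∫ p : ℝ × ℝ, F (p.1 + p.2*Complex.I) := by
  rw [← (Complex.volume_preserving_equiv_real_prod.symm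
      Complex.measurableEquivRealProd).integral_comp
      (Complex.measurableEquivRealProd.symm).measurableEmbedding F]
  congr 1
  funext p
  rw [Complex.measurableEquivRealProd_symm_apply]
  rw [Complex.mk_eq_add_mul_I]

lemma pointwise_bound (k : ℂ × ℂ → ℂ) (hk : ContDiff ℝ (⊤ : ℕ∞) k)
    (Ck Ck' : ℝ) (hCk : ∀ p, ‖k p‖ ≤ Ck) (hCk' : ∀ p, ‖fderiv ℝ k p‖ ≤ Ck')
    (lam : ℝ) (hlam : 1 ≤ lam) (z₀ : ℂ) (f : ℂ → ℂ)
    (hf : ContDiff ℝ (⊤ : ℕ∞) f) (hfc : HasCompactSupport f) (z : ℂ) :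
    ‖kernelOp k (fun ζ =>
        Complex.exp (2 * Complex.I * (lam : ℂ) * (((ζ - z₀) ^ 2).re : ℂ)) * f ζ) z‖
      ≤ 4 * lam ^ (-(1/2) : ℝ) *
        ∫ ζ : ℂ, (Ck' * ‖f ζ‖ + Ck * ‖fderiv ℝ f ζ 1‖) := by
  have hCk0 : 0 ≤ Ck := le_trans (norm_nonneg _) (hCk 0)
  have hCk'0 : 0 ≤ Ck' := le_trans (norm_nonneg _) (hCk' 0)
  have hlam0 : (0:ℝ) < lam := lt_of_lt_of_le one_pos hlam
  set x₀ : ℝ := z₀.re with hx₀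
  set y₀ : ℝ := z₀.im with hy₀
  set F : ℂ → ℂ := fun ζ =>
    k (z, ζ) * (Complex.exp (2 * Complex.I * (lam : ℂ) * (((ζ - z₀) ^ 2).re : ℂ)) * f ζ) with hF
  -- continuity facts
  have hkcont : Continuous k := hk.continuous
  have hfcont : Continuous f := hf.continuous
  have hkz : Continuous (fun ζ : ℂ => k (z, ζ)) :=
    hkcont.comp (continuous_const.prodMk continuous_id)
  have hexpcont : Continuous (fun ζ : ℂ =>
      Complex.exp (2 * Complex.I * (lam : ℂ) * (((ζ - z₀) ^ 2).re : ℂ))) := by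
    apply Complex.continuous_exp.comp
    exact continuous_const.mul (Complex.continuous_ofReal.comp
      (Complex.continuous_re.comp ((continuous_id.sub continuous_const).pow 2)))
  have hFcont : Continuous F := hkz.mul (hexpcont.mul hfcont)
  have hFsupp : HasCompactSupport F := by
    apply HasCompactSupport.mono' hfc
    intro ζ hζ
    apply subset_tsupport
    rw [Function.mem_support] at hζ ⊢
    intro h0
    apply hζ
    rw [hF]
    simp [h0]
  -- derivative bound function
  set w : ℂ → ℝ := fun ζ => Ck' * ‖f ζ‖ + Ck * ‖fderiv ℝ f ζ 1‖ with hw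
  have hdfcont : Continuous (fun ζ : ℂ => fderiv ℝ f ζ 1) :=
    (hf.continuous_fderiv (by simp)).clm_apply continuous_const
  have hwcont : Continuous w :=
    (continuous_const.mul hfcont.norm).add (continuous_const.mul hdfcont.norm)
  have hwsupp : HasCompactSupport w := by
    apply HasCompactSupport.mono' hfc
    intro ζ hζ
    rw [Function.mem_support] at hζ
    by_cases h0 : ζ ∈ tsupport f
    · exact h0
    · exfalso
      apply hζ
      have h1 : f ζ = 0 := image_eq_zero_of_notMem_tsupport h0
      have h2 : fderiv ℝ f ζ = 0 := by
        by_contra hcon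
        exact h0 (support_fderiv_subset ℝ (Function.mem_support.mpr hcon))
      rw [hw]
      simp [h1, h2]
  -- support radius for f
  obtain ⟨R, hR⟩ := hfc.isBounded.subset_closedBall 0
  have hfzero : ∀ ζ : ℂ, R < ‖ζ‖ → f ζ = 0 := by
    intro ζ hζ
    apply image_eq_zero_of_notMem_tsupport
    intro hmem
    have := hR hmem
    rw [Metric.mem_closedBall, dist_zero_right] at this
    linarith
  -- spell the integral via ℝ²
  have hstep1 : kernelOp k (fun ζ =>
      Complex.exp (2 * Complex.I * (lam : ℂ) * (((ζ - z₀) ^ 2).re : ℂ)) * f ζ) z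
      = ∫ p : ℝ × ℝ, F (p.1 + p.2*Complex.I) := by
    rw [kernelOp, ← integral_complex_eq_prod F]
  have hwprod : ∫ ζ : ℂ, w ζ = ∫ p : ℝ × ℝ, w (p.1 + p.2*Complex.I) :=
    integral_complex_eq_prod w
  -- integrability on the product
  have hPcont : Continuous (fun p : ℝ × ℝ => F (p.1 + p.2*Complex.I)) :=
    hFcont.comp ((continuous_ofReal.comp continuous_fst).add
      ((continuous_ofReal.comp continuous_snd).mul continuous_const))
  have hPint : Integrable (fun p : ℝ × ℝ => F (p.1 + p.2*Complex.I)) :=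
    hPcont.integrable_of_hasCompactSupport (hcs_comp F hFsupp)
  have hWcont : Continuous (fun p : ℝ × ℝ => w (p.1 + p.2*Complex.I)) :=
    hwcont.comp ((continuous_ofReal.comp continuous_fst).add
      ((continuous_ofReal.comp continuous_snd).mul continuous_const))
  have hWint : Integrable (fun p : ℝ × ℝ => w (p.1 + p.2*Complex.I)) :=
    hWcont.integrable_of_hasCompactSupport (hcs_comp w hwsupp)
  have hwzero : ∀ ζ : ℂ, ζ ∉ tsupport f → w ζ = 0 := by
    intro ζ h0
    have h1 : f ζ = 0 := image_eq_zero_of_notMem_tsupport h0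
    have h2 : fderiv ℝ f ζ = 0 := by
      by_contra hcon
      exact h0 (support_fderiv_subset ℝ (Function.mem_support.mpr hcon))
    rw [hw]
    simp [h1, h2]
  -- the per-line estimate
  have hslice : ∀ y : ℝ, ‖∫ x : ℝ, F ((x:ℂ) + (y:ℂ)*Complex.I)‖
      ≤ 4 * lam ^ (-(1/2) : ℝ) * ∫ x : ℝ, w ((x:ℂ) + (y:ℂ)*Complex.I) := by
    intro y
    set hy : ℝ → ℂ := fun x => k (z, (x:ℂ) + (y:ℂ)*Complex.I) * f ((x:ℂ) + (y:ℂ)*Complex.I)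
      with hhy
    set hy' : ℝ → ℂ := fun x =>
      (fderiv ℝ k (z, (x:ℂ) + (y:ℂ)*Complex.I)) (0, 1) * f ((x:ℂ) + (y:ℂ)*Complex.I)
        + k (z, (x:ℂ) + (y:ℂ)*Complex.I) * (fderiv ℝ f ((x:ℂ) + (y:ℂ)*Complex.I) 1) with hhy'
    set cy : ℂ := Complex.exp (((-(2 * lam * (y - y₀)^2) : ℝ) : ℂ) * Complex.I) with hcy
    have hmder : ∀ x : ℝ, HasDerivAt (fun x : ℝ => ((x:ℂ) + (y:ℂ)*Complex.I)) 1 x := by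
      intro x
      simpa using (Complex.ofRealCLM.hasDerivAt (x := x)).add_const ((y:ℂ)*Complex.I)
    have hder : ∀ x, HasDerivAt hy (hy' x) x := by
      intro x
      have hk1 : HasDerivAt (fun x : ℝ => k (z, (x:ℂ) + (y:ℂ)*Complex.I))
          ((fderiv ℝ k (z, (x:ℂ) + (y:ℂ)*Complex.I)) (0, 1)) x := by
        have hm : HasDerivAt (fun x : ℝ => ((z : ℂ), (x:ℂ) + (y:ℂ)*Complex.I))
            (((0:ℂ), (1:ℂ))) x := (hasDerivAt_const x z).prodMk (hmder x)
        exact (((hk.differentiable (by simp)) _).hasFDerivAt).comp_hasDerivAt x hm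
      have hf1 : HasDerivAt (fun x : ℝ => f ((x:ℂ) + (y:ℂ)*Complex.I))
          ((fderiv ℝ f ((x:ℂ) + (y:ℂ)*Complex.I)) 1) x := by
        have := (((hf.differentiable (by simp)) _).hasFDerivAt).comp_hasDerivAt x (hmder x)
        exact this
      exact hk1.mul hf1
    have hmc : Continuous (fun x : ℝ => ((x:ℂ) + (y:ℂ)*Complex.I)) :=
      Complex.continuous_ofReal.add continuous_const
    have hc' : Continuous hy' := by
      apply Continuous.add
      · exact (((hk.continuous_fderiv (by simp)).comp
          (continuous_const.prodMk hmc)).clm_apply continuous_const).mul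
          (hfcont.comp hmc)
      · exact (hkz.comp hmc).mul
          (((hf.continuous_fderiv (by simp)).comp hmc).clm_apply continuous_const)
    have habs : ∀ x : ℝ, |x| ≤ ‖(x:ℂ) + (y:ℂ)*Complex.I‖ := by
      intro x
      have h1 := Complex.abs_re_le_norm ((x:ℂ) + (y:ℂ)*Complex.I)
      simpa using h1
    have hsupp : ∀ x : ℝ, R + 1 ≤ |x| → hy x = 0 := by
      intro x hx
      have : R < ‖(x:ℂ) + (y:ℂ)*Complex.I‖ := lt_of_lt_of_le (by linarith) (habs x)
      rw [hhy]
      simp only []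
      rw [hfzero _ this, mul_zero]
    have hosc := osc_line lam x₀ hlam hy hy' hder hc' (R+1) hsupp
    -- phase factorization
    have halg : ∀ x : ℝ, F ((x:ℂ) + (y:ℂ)*Complex.I)
        = cy * (hy x * Complex.exp (((2 * lam * (x - x₀)^2 : ℝ) : ℂ) * Complex.I)) := by
      intro x
      have hre : ((((x:ℂ) + (y:ℂ)*Complex.I) - z₀)^2).re = (x - x₀)^2 - (y - y₀)^2 := by
        simp only [pow_two, Complex.mul_re, Complex.sub_re, Complex.sub_im, Complex.add_re,
          Complex.add_im, Complex.mul_im, Complex.ofReal_re, Complex.ofReal_im,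
          Complex.I_re, Complex.I_im, hx₀, hy₀]
        ring
      have hexpeq : Complex.exp (2 * Complex.I * (lam : ℂ)
            * ((((((x:ℂ) + (y:ℂ)*Complex.I) - z₀)^2).re : ℝ) : ℂ))
          = cy * Complex.exp (((2 * lam * (x - x₀)^2 : ℝ) : ℂ) * Complex.I) := by
        rw [hcy, ← Complex.exp_add]
        congr 1
        rw [hre]
        push_cast
        ring
      rw [hF]
      simp only []
      rw [hexpeq, hhy]
      ring
    have hint2 : ∫ x : ℝ, F ((x:ℂ) + (y:ℂ)*Complex.I)
        = cy * ∫ x : ℝ, hy x * Complex.exp (((2 * lam * (x - x₀)^2 : ℝ) : ℂ) * Complex.I) := by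
      rw [← MeasureTheory.integral_const_mul]
      congr 1
      funext x
      exact halg x
    have hcynorm : ‖cy‖ = 1 := by
      rw [hcy, Complex.norm_exp_ofReal_mul_I]
    -- slice integrability of w
    have hWy : Integrable (fun x : ℝ => w ((x:ℂ) + (y:ℂ)*Complex.I)) := by
      apply (hwcont.comp hmc).integrable_of_hasCompactSupport
      apply HasCompactSupport.intro (isCompact_Icc (a := -(R+1)) (b := R+1))
      intro x hx
      apply hwzero
      intro hmem
      apply hx
      have h1 : ‖(x:ℂ) + (y:ℂ)*Complex.I‖ ≤ R := by
        have := hR hmem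
        rwa [Metric.mem_closedBall, dist_zero_right] at this
      have := le_trans (habs x) h1
      rw [abs_le] at this
      constructor <;> [linarith [this.1]; linarith [this.2]]
    -- pointwise bound of ‖hy'‖
    have hpoint : ∀ x : ℝ, ‖hy' x‖ ≤ w ((x:ℂ) + (y:ℂ)*Complex.I) := by
      intro x
      rw [hhy', hw]
      have h01 : ‖((0:ℂ), (1:ℂ))‖ = 1 := by
        simp [Prod.norm_def]
      have hdk : ‖(fderiv ℝ k (z, (x:ℂ) + (y:ℂ)*Complex.I)) (0, 1)‖ ≤ Ck' := by
        calc ‖(fderiv ℝ k (z, (x:ℂ) + (y:ℂ)*Complex.I)) ((0:ℂ), (1:ℂ))‖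
            ≤ ‖fderiv ℝ k (z, (x:ℂ) + (y:ℂ)*Complex.I)‖ * ‖((0:ℂ), (1:ℂ))‖ :=
              ContinuousLinearMap.le_opNorm _ _
          _ = ‖fderiv ℝ k (z, (x:ℂ) + (y:ℂ)*Complex.I)‖ := by rw [h01, mul_one]
          _ ≤ Ck' := hCk' _
      calc ‖(fderiv ℝ k (z, (x:ℂ) + (y:ℂ)*Complex.I)) (0, 1) * f ((x:ℂ) + (y:ℂ)*Complex.I)
            + k (z, (x:ℂ) + (y:ℂ)*Complex.I) * (fderiv ℝ f ((x:ℂ) + (y:ℂ)*Complex.I) 1)‖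
          ≤ ‖(fderiv ℝ k (z, (x:ℂ) + (y:ℂ)*Complex.I)) (0, 1) * f ((x:ℂ) + (y:ℂ)*Complex.I)‖
            + ‖k (z, (x:ℂ) + (y:ℂ)*Complex.I) * (fderiv ℝ f ((x:ℂ) + (y:ℂ)*Complex.I) 1)‖ :=
            norm_add_le _ _
        _ ≤ Ck' * ‖f ((x:ℂ) + (y:ℂ)*Complex.I)‖
            + Ck * ‖fderiv ℝ f ((x:ℂ) + (y:ℂ)*Complex.I) 1‖ := by
            rw [norm_mul, norm_mul]
            apply add_le_add
            · exact mul_le_mul_of_nonneg_right hdk (norm_nonneg _)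
            · exact mul_le_mul_of_nonneg_right (hCk _) (norm_nonneg _)
    have hintbound : ∫ x : ℝ, ‖hy' x‖ ≤ ∫ x : ℝ, w ((x:ℂ) + (y:ℂ)*Complex.I) :=
      integral_mono_of_nonneg (Filter.Eventually.of_forall (fun x => norm_nonneg _))
        hWy (Filter.Eventually.of_forall hpoint)
    calc ‖∫ x : ℝ, F ((x:ℂ) + (y:ℂ)*Complex.I)‖
        = ‖cy‖ * ‖∫ x : ℝ, hy x * Complex.exp (((2 * lam * (x - x₀)^2 : ℝ) : ℂ) * Complex.I)‖ := by
          rw [hint2, norm_mul]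
      _ = ‖∫ x : ℝ, hy x * Complex.exp (((2 * lam * (x - x₀)^2 : ℝ) : ℂ) * Complex.I)‖ := by
          rw [hcynorm, one_mul]
      _ ≤ 4 * lam ^ (-(1/2) : ℝ) * ∫ x : ℝ, ‖hy' x‖ := hosc
      _ ≤ 4 * lam ^ (-(1/2) : ℝ) * ∫ x : ℝ, w ((x:ℂ) + (y:ℂ)*Complex.I) := by
          apply mul_le_mul_of_nonneg_left hintbound
          positivity
  -- combine via Fubini
  have hfub1 : ∫ p : ℝ × ℝ, F (p.1 + p.2*Complex.I)
      = ∫ y : ℝ, ∫ x : ℝ, F ((x:ℂ) + (y:ℂ)*Complex.I) := by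
    rw [Measure.volume_eq_prod ℝ ℝ]
    exact integral_prod_symm _ (by rw [← Measure.volume_eq_prod]; exact hPint)
  have hfub2 : ∫ p : ℝ × ℝ, w (p.1 + p.2*Complex.I)
      = ∫ y : ℝ, ∫ x : ℝ, w ((x:ℂ) + (y:ℂ)*Complex.I) := by
    rw [Measure.volume_eq_prod ℝ ℝ]
    exact integral_prod_symm _ (by rw [← Measure.volume_eq_prod]; exact hWint)
  have hWyint : Integrable (fun y : ℝ => ∫ x : ℝ, w ((x:ℂ) + (y:ℂ)*Complex.I)) := by
    have := (by rw [← Measure.volume_eq_prod]; exact hWint :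
      Integrable (fun p : ℝ × ℝ => w (p.1 + p.2*Complex.I)) ((volume : Measure ℝ).prod volume))
    exact this.integral_prod_right
  rw [hstep1, hfub1]
  calc ‖∫ y : ℝ, ∫ x : ℝ, F ((x:ℂ) + (y:ℂ)*Complex.I)‖
      ≤ ∫ y : ℝ, ‖∫ x : ℝ, F ((x:ℂ) + (y:ℂ)*Complex.I)‖ := norm_integral_le_integral_norm _
    _ ≤ ∫ y : ℝ, 4 * lam ^ (-(1/2) : ℝ) * ∫ x : ℝ, w ((x:ℂ) + (y:ℂ)*Complex.I) := by
        apply integral_mono_of_nonneg (Filter.Eventually.of_forall (fun y => norm_nonneg _))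
          (hWyint.const_mul _) (Filter.Eventually.of_forall hslice)
    _ = 4 * lam ^ (-(1/2) : ℝ) * ∫ y : ℝ, ∫ x : ℝ, w ((x:ℂ) + (y:ℂ)*Complex.I) :=
        MeasureTheory.integral_const_mul _ _
    _ = 4 * lam ^ (-(1/2) : ℝ) * ∫ ζ : ℂ, (Ck' * ‖f ζ‖ + Ck * ‖fderiv ℝ f ζ 1‖) := by
        rw [← hfub2, ← hwprod]

theorem stmt_9 (Ω : Set ℂ) (hΩo : IsOpen Ω) (hΩb : Bornology.IsBounded Ω)
    (k : ℂ × ℂ → ℂ) (hk : ContDiff ℝ (⊤ : ℕ∞) k) (hkc : HasCompactSupport k)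
    (r : ℝ) (hr : 2 < r) :
    ∃ C : ℝ, 0 < C ∧ ∀ (lam : ℝ), 1 ≤ lam → ∀ (z₀ : ℂ) (f : ℂ → ℂ),
      ContDiff ℝ (⊤ : ℕ∞) f → HasCompactSupport f → tsupport f ⊆ Ω →
      eLpNorm
          (kernelOp k (fun z =>
            Complex.exp (2 * Complex.I * (lam : ℂ) * (((z - z₀) ^ 2).re : ℂ)) * f z))
          ⊤ volume
        ≤ ENNReal.ofReal (C * lam ^ (-(1 / r))) * W1pNorm Ω (ENNReal.ofReal r) f := by
  obtain ⟨Ck, hCk⟩ := hkc.exists_bound_of_continuous hk.continuous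
  have hdkc : HasCompactSupport (fderiv ℝ k) := HasCompactSupport.fderiv (𝕜 := ℝ) hkc
  obtain ⟨Ck', hCk'⟩ := hdkc.exists_bound_of_continuous (hk.continuous_fderiv (by simp))
  have hCk0 : 0 ≤ Ck := le_trans (norm_nonneg _) (hCk 0)
  have hCk'0 : 0 ≤ Ck' := le_trans (norm_nonneg _) (hCk' 0)
  have hr0 : (0:ℝ) < r := by linarith
  have hΩvol : volume Ω < ⊤ := hΩb.measure_lt_top
  set W : ℝ≥0∞ := (volume Ω) ^ (1 - 1/r) with hWdef
  have hWne : W ≠ ⊤ := by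
    apply ENNReal.rpow_ne_top_of_nonneg _ hΩvol.ne
    have : 1/r < 1/2 := by
      rw [div_lt_div_iff₀ hr0 (by norm_num)]
      linarith
    linarith
  set Wr : ℝ := W.toReal with hWrdef
  have hWr0 : 0 ≤ Wr := ENNReal.toReal_nonneg
  have hWeq : W = ENNReal.ofReal Wr := by
    rw [hWrdef, ENNReal.ofReal_toReal hWne]
  set K : ℝ := Ck + Ck' + 1 with hK
  have hK1 : 1 ≤ K := by rw [hK]; linarith
  have hK0 : 0 < K := by linarith
  refine ⟨4 * K * (Wr + 1) + 1, by positivity, ?_⟩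
  intro lam hlam z₀ f hf hfc hsuppΩ
  have hlam0 : (0:ℝ) < lam := lt_of_lt_of_le one_pos hlam
  -- integrability
  have hfint : Integrable f := hf.continuous.integrable_of_hasCompactSupport hfc
  have hdfsupp : HasCompactSupport (fun ζ : ℂ => fderiv ℝ f ζ 1) := by
    apply hfc.mono'
    intro ζ hζ
    rw [Function.mem_support] at hζ
    apply support_fderiv_subset ℝ
    rw [Function.mem_support]
    intro h0
    apply hζ
    rw [h0]
    rfl
  have hdfcont : Continuous (fun ζ : ℂ => fderiv ℝ f ζ 1) :=
    (hf.continuous_fderiv (by simp)).clm_apply continuous_const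
  have hdfint : Integrable (fun ζ : ℂ => fderiv ℝ f ζ 1) :=
    hdfcont.integrable_of_hasCompactSupport hdfsupp
  set A : ℝ := ∫ ζ : ℂ, ‖f ζ‖ with hA
  set B : ℝ := ∫ ζ : ℂ, ‖fderiv ℝ f ζ 1‖ with hB
  have hA0 : 0 ≤ A := integral_nonneg (fun ζ => norm_nonneg _)
  have hB0 : 0 ≤ B := integral_nonneg (fun ζ => norm_nonneg _)
  -- pointwise bound on the operator
  set M : ℝ := 4 * lam ^ (-(1/2) : ℝ) * (Ck' * A + Ck * B) with hM
  have hpt : ∀ z : ℂ, ‖kernelOp k (fun ζ =>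
      Complex.exp (2 * Complex.I * (lam : ℂ) * (((ζ - z₀) ^ 2).re : ℂ)) * f ζ) z‖ ≤ M := by
    intro z
    have h1 := pointwise_bound k hk Ck Ck' hCk hCk' lam hlam z₀ f hf hfc z
    have h2 : ∫ ζ : ℂ, (Ck' * ‖f ζ‖ + Ck * ‖fderiv ℝ f ζ 1‖) = Ck' * A + Ck * B := by
      rw [integral_add ((hfint.norm).const_mul _) ((hdfint.norm).const_mul _),
        MeasureTheory.integral_const_mul, MeasureTheory.integral_const_mul]
    rw [h2] at h1
    exact h1
  have hLHS : eLpNorm (kernelOp k (fun ζ =>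
      Complex.exp (2 * Complex.I * (lam : ℂ) * (((ζ - z₀) ^ 2).re : ℂ)) * f ζ)) ⊤ volume
      ≤ ENNReal.ofReal M := by
    rw [eLpNorm_exponent_top]
    exact eLpNormEssSup_le_of_ae_bound (Filter.Eventually.of_forall hpt)
  -- L¹ → Lʳ(Ω) comparison
  have hpq : (1 : ℝ≥0∞) ≤ ENNReal.ofReal r := by
    rw [ENNReal.one_le_ofReal]; linarith
  have hexp : 1/(1:ℝ≥0∞).toReal - 1/(ENNReal.ofReal r).toReal = 1 - 1/r := by
    rw [ENNReal.toReal_one, ENNReal.toReal_ofReal (by linarith)]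
    norm_num
  have hholder : ∀ (g : ℂ → ℂ), Continuous g → Integrable g → Function.support g ⊆ Ω →
      ENNReal.ofReal (∫ ζ : ℂ, ‖g ζ‖) ≤ eLpNorm g (ENNReal.ofReal r) (volume.restrict Ω) * W := by
    intro g hgc hgi hgs
    have h1 : ENNReal.ofReal (∫ ζ : ℂ, ‖g ζ‖) = eLpNorm g 1 volume := by
      rw [eLpNorm_one_eq_lintegral_enorm, ofReal_integral_norm_eq_lintegral_enorm hgi]
    have h2 : eLpNorm g 1 volume = eLpNorm g 1 (volume.restrict Ω) :=
      (eLpNorm_restrict_eq_of_support_subset hgs).symm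
    have h3 := eLpNorm_le_eLpNorm_mul_rpow_measure_univ (μ := volume.restrict Ω) hpq
      hgc.aestronglyMeasurable
    rw [Measure.restrict_apply_univ, hexp] at h3
    rw [h1, h2]
    exact h3
  have hAle : ENNReal.ofReal A ≤ eLpNorm f (ENNReal.ofReal r) (volume.restrict Ω) * W :=
    hholder f hf.continuous hfint ((subset_tsupport f).trans hsuppΩ)
  have hBle : ENNReal.ofReal B
      ≤ eLpNorm (fun z => fderiv ℝ f z 1) (ENNReal.ofReal r) (volume.restrict Ω) * W := by
    apply hholder _ hdfcont hdfint
    intro ζ hζ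
    rw [Function.mem_support] at hζ
    exact hsuppΩ (support_fderiv_subset ℝ
      (Function.mem_support.mpr (fun h0 => hζ (by rw [h0]; rfl))))
  set NA := eLpNorm f (ENNReal.ofReal r) (volume.restrict Ω) with hNA
  set NB := eLpNorm (fun z => fderiv ℝ f z 1) (ENNReal.ofReal r) (volume.restrict Ω) with hNB
  -- scalar inequality
  have hrpow : lam ^ (-(1/2) : ℝ) ≤ lam ^ (-(1/r)) := by
    apply Real.rpow_le_rpow_of_exponent_le hlam
    have : 1/r ≤ 1/2 := by
      rw [div_le_div_iff₀ hr0 (by norm_num)]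
      linarith
    linarith
  have hrpow0 : (0:ℝ) ≤ lam ^ (-(1/r)) := Real.rpow_nonneg (le_of_lt hlam0) _
  have hrpow0' : (0:ℝ) ≤ lam ^ (-(1/2) : ℝ) := Real.rpow_nonneg (le_of_lt hlam0) _
  have hscalar : 4 * lam ^ (-(1/2) : ℝ) * K * Wr ≤ (4 * K * (Wr + 1) + 1) * lam ^ (-(1/r)) := by
    have h1 : 4 * lam ^ (-(1/2) : ℝ) * K * Wr ≤ 4 * lam ^ (-(1/r)) * K * Wr := by
      have := mul_le_mul_of_nonneg_right (mul_le_mul_of_nonneg_right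
        (mul_le_mul_of_nonneg_left hrpow (by norm_num : (0:ℝ) ≤ 4)) (le_of_lt hK0)) hWr0
      linarith
    have h2 : 4 * lam ^ (-(1/r)) * K * Wr ≤ (4 * K * (Wr + 1) + 1) * lam ^ (-(1/r)) := by
      have hcoef : 4 * K * Wr ≤ 4 * K * (Wr + 1) + 1 := by nlinarith
      calc 4 * lam ^ (-(1/r)) * K * Wr = (4 * K * Wr) * lam ^ (-(1/r)) := by ring
        _ ≤ (4 * K * (Wr + 1) + 1) * lam ^ (-(1/r)) :=
            mul_le_mul_of_nonneg_right hcoef hrpow0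
    linarith
  -- ENNReal assembly
  apply le_trans hLHS
  have hMsplit : ENNReal.ofReal M
      = ENNReal.ofReal (4 * lam ^ (-(1/2) : ℝ))
        * (ENNReal.ofReal Ck' * ENNReal.ofReal A + ENNReal.ofReal Ck * ENNReal.ofReal B) := by
    rw [hM, ← ENNReal.ofReal_mul hCk'0, ← ENNReal.ofReal_mul hCk0,
      ← ENNReal.ofReal_add (by positivity) (by positivity),
      ← ENNReal.ofReal_mul (by positivity)]
  rw [hMsplit]
  have hstep : ENNReal.ofReal (4 * lam ^ (-(1/2) : ℝ))
        * (ENNReal.ofReal Ck' * ENNReal.ofReal A + ENNReal.ofReal Ck * ENNReal.ofReal B)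
      ≤ ENNReal.ofReal (4 * lam ^ (-(1/2) : ℝ)) * ENNReal.ofReal K * W * (NA + NB) := by
    calc ENNReal.ofReal (4 * lam ^ (-(1/2) : ℝ))
        * (ENNReal.ofReal Ck' * ENNReal.ofReal A + ENNReal.ofReal Ck * ENNReal.ofReal B)
        ≤ ENNReal.ofReal (4 * lam ^ (-(1/2) : ℝ))
          * (ENNReal.ofReal K * (NA * W) + ENNReal.ofReal K * (NB * W)) := by
          gcongr ?_ * (?_ * ?_ + ?_ * ?_) <;>
            first
              | rfl
              | exact ENNReal.ofReal_le_ofReal (by rw [hK]; linarith)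
              | exact hAle
              | exact hBle
      _ = ENNReal.ofReal (4 * lam ^ (-(1/2) : ℝ)) * ENNReal.ofReal K * W * (NA + NB) := by
          ring
  apply le_trans hstep
  have hcollapse : ENNReal.ofReal (4 * lam ^ (-(1/2) : ℝ)) * ENNReal.ofReal K * W
      = ENNReal.ofReal (4 * lam ^ (-(1/2) : ℝ) * K * Wr) := by
    rw [hWeq, ← ENNReal.ofReal_mul (by positivity), ← ENNReal.ofReal_mul (by positivity)]
  rw [hcollapse]
  have hfinal1 : ENNReal.ofReal (4 * lam ^ (-(1/2) : ℝ) * K * Wr)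
      ≤ ENNReal.ofReal ((4 * K * (Wr + 1) + 1) * lam ^ (-(1/r))) :=
    ENNReal.ofReal_le_ofReal hscalar
  have hfinal2 : NA + NB ≤ W1pNorm Ω (ENNReal.ofReal r) f := by
    rw [W1pNorm, ← hNA, ← hNB]
    exact le_self_add
  exact mul_le_mul' hfinal1 hfinal2
end

section
/- Let Ω ⊂ ℂ be a bounded open set, let k : ℂ × ℂ → ℂ be smooth with compact support, and define the integral operator (Kf)(z) := ∫_ℂ k(z, ζ) f(ζ) dA(ζ). Let p ∈ (4/3, 2) and q ∈ (2, 4) satisfy 1/p + 1/q = 1. Then there exists a constant C > 0, depending only on Ω, p, q, k, such that for every ω ∈ ℂ with ω ≠ 0 and every smooth compactly supported f : ℂ → ℂ with support contained in Ω, one has ‖K( e^{−i·Re((·)·ω̄)} f )‖_{L^q(ℂ)} ≤ C · |ω|^{−1} · ‖f‖_{W^{1,p}(Ω)}. -/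
open MeasureTheory Complex
open scoped ENNReal

noncomputable def phiCLM (ω : ℂ) : ℂ →L[ℝ] ℂ :=
  (-Complex.I) • (Complex.ofRealCLM.comp (Complex.reCLM.comp
    (((starRingEnd ℂ) ω) • (ContinuousLinearMap.id ℝ ℂ))))

lemma phiCLM_apply (ω v : ℂ) :
    phiCLM ω v = -Complex.I * (((v * (starRingEnd ℂ) ω).re : ℝ) : ℂ) := by
  simp [phiCLM, smul_eq_mul, mul_comm]

noncomputable def eFun (ω z : ℂ) : ℂ :=
  Complex.exp (-Complex.I * (((z * (starRingEnd ℂ) ω).re : ℝ) : ℂ))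

lemma eFun_hasFDerivAt (ω ζ : ℂ) :
    HasFDerivAt (eFun ω)
      ((((1 : ℂ →L[ℂ] ℂ).smulRight (eFun ω ζ)).restrictScalars ℝ).comp (phiCLM ω)) ζ := by
  have h1 : HasFDerivAt (fun z => Complex.exp (phiCLM ω z))
      ((((1 : ℂ →L[ℂ] ℂ).smulRight (Complex.exp (phiCLM ω ζ))).restrictScalars ℝ).comp
        (phiCLM ω)) ζ := by
    exact (((Complex.hasDerivAt_exp (phiCLM ω ζ)).hasFDerivAt).restrictScalars ℝ).comp ζ
      (phiCLM ω).hasFDerivAt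
  have : (fun z => Complex.exp (phiCLM ω z)) = eFun ω := by
    funext z; rw [phiCLM_apply]; rfl
  rw [← this]
  exact h1

lemma eFun_fderiv_apply (ω ζ v : ℂ) :
    fderiv ℝ (eFun ω) ζ v
      = (-Complex.I * (((v * (starRingEnd ℂ) ω).re : ℝ) : ℂ)) * eFun ω ζ := by
  rw [(eFun_hasFDerivAt ω ζ).fderiv]
  simp [phiCLM_apply, smul_eq_mul, mul_comm]

lemma eFun_fderiv_self (ω ζ : ℂ) :
    fderiv ℝ (eFun ω) ζ ω = (-Complex.I * (Complex.normSq ω : ℂ)) * eFun ω ζ := by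
  rw [eFun_fderiv_apply, Complex.mul_conj]
  norm_num

lemma eFun_norm (ω ζ : ℂ) : ‖eFun ω ζ‖ = 1 := by
  simp [eFun, Complex.norm_exp]

lemma eFun_diff (ω : ℂ) : Differentiable ℝ (eFun ω) :=
  fun ζ => (eFun_hasFDerivAt ω ζ).differentiableAt

lemma eFun_cont (ω : ℂ) : Continuous (eFun ω) := (eFun_diff ω).continuous

noncomputable def gFun (f : ℂ → ℂ) (ζ : ℂ) : ℝ :=
  ‖f ζ‖ + ‖fderiv ℝ f ζ 1‖ + ‖fderiv ℝ f ζ Complex.I‖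

lemma gFun_nonneg (f : ℂ → ℂ) (ζ : ℂ) : 0 ≤ gFun f ζ := by
  unfold gFun; positivity

lemma gFun_cont {f : ℂ → ℂ} (hf : ContDiff ℝ (⊤ : ℕ∞) f) : Continuous (gFun f) := by
  have hc := hf.continuous_fderiv ((by simp))
  exact (hf.continuous.norm.add
    (((ContinuousLinearMap.apply ℝ ℂ 1).continuous.comp hc).norm)).add
    (((ContinuousLinearMap.apply ℝ ℂ Complex.I).continuous.comp hc).norm)

lemma gFun_supp {f : ℂ → ℂ} (hfc : HasCompactSupport f) : HasCompactSupport (gFun f) := by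
  have h1 : HasCompactSupport (fun ζ => fderiv ℝ f ζ 1) :=
    (hfc.fderiv ℝ).comp_left (g := fun L : ℂ →L[ℝ] ℂ => L 1) rfl
  have h2 : HasCompactSupport (fun ζ => fderiv ℝ f ζ Complex.I) :=
    (hfc.fderiv ℝ).comp_left (g := fun L : ℂ →L[ℝ] ℂ => L Complex.I) rfl
  exact (hfc.norm.add h1.norm).add h2.norm

lemma gFun_integrable {f : ℂ → ℂ} (hf : ContDiff ℝ (⊤ : ℕ∞) f) (hfc : HasCompactSupport f) :
    Integrable (gFun f) := (gFun_cont hf).integrable_of_hasCompactSupport (gFun_supp hfc)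

lemma fderiv_apply_bound {f : ℂ → ℂ} (hf : ContDiff ℝ (⊤ : ℕ∞) f) (ζ ω : ℂ) :
    ‖fderiv ℝ f ζ ω‖ ≤ ‖ω‖ * (‖fderiv ℝ f ζ 1‖ + ‖fderiv ℝ f ζ Complex.I‖) := by
  have hω : ω = (ω.re : ℝ) • (1 : ℂ) + (ω.im : ℝ) • Complex.I := by
    simp [Complex.real_smul]
  calc ‖fderiv ℝ f ζ ω‖
      = ‖(ω.re : ℝ) • fderiv ℝ f ζ 1 + (ω.im : ℝ) • fderiv ℝ f ζ Complex.I‖ := by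
        conv_lhs => rw [hω]
        rw [map_add, _root_.map_smul, _root_.map_smul]
    _ ≤ ‖(ω.re : ℝ) • fderiv ℝ f ζ 1‖ + ‖(ω.im : ℝ) • fderiv ℝ f ζ Complex.I‖ :=
        norm_add_le _ _
    _ ≤ ‖ω‖ * ‖fderiv ℝ f ζ 1‖ + ‖ω‖ * ‖fderiv ℝ f ζ Complex.I‖ := by
        rw [norm_smul, norm_smul]
        gcongr
        · exact (Complex.abs_re_le_norm ω)
        · exact (Complex.abs_im_le_norm ω)
    _ = ‖ω‖ * (‖fderiv ℝ f ζ 1‖ + ‖fderiv ℝ f ζ Complex.I‖) := by ring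

lemma pointwise_bound_s10 {k : ℂ × ℂ → ℂ} (hk : ContDiff ℝ (⊤ : ℕ∞) k) (hkc : HasCompactSupport k)
    {f : ℂ → ℂ} (hf : ContDiff ℝ (⊤ : ℕ∞) f) (hfc : HasCompactSupport f)
    {ω : ℂ} (hω : ω ≠ 0) {M : ℝ}
    (hMk : ∀ x, ‖k x‖ ≤ M) (hMk' : ∀ x, ‖fderiv ℝ k x‖ ≤ M) (z : ℂ) :
    ‖∫ ζ, k (z, ζ) * (eFun ω ζ * f ζ)‖ ≤ ‖ω‖⁻¹ * (M * ∫ ζ, gFun f ζ) := by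
  have hM0 : 0 ≤ M := le_trans (norm_nonneg _) (hMk 0)
  set h : ℂ → ℂ := fun ζ => k (z, ζ) * f ζ with hh_def
  have hιd : ∀ ζ : ℂ, HasFDerivAt (fun ζ : ℂ => (z, ζ))
      (((0 : ℂ →L[ℝ] ℂ)).prod (ContinuousLinearMap.id ℝ ℂ)) ζ := fun ζ =>
    HasFDerivAt.prodMk (hasFDerivAt_const z ζ) (hasFDerivAt_id ζ)
  have hk1 : ∀ ζ : ℂ, HasFDerivAt (fun ζ => k (z, ζ))
      ((fderiv ℝ k (z, ζ)).comp (((0 : ℂ →L[ℝ] ℂ)).prod (ContinuousLinearMap.id ℝ ℂ))) ζ :=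
    fun ζ => ((hk.differentiable (by simp) (z, ζ)).hasFDerivAt).comp ζ (hιd ζ)
  have hh_smooth : ContDiff ℝ (⊤ : ℕ∞) h :=
    (hk.comp ((contDiff_const (c := z)).prodMk contDiff_id)).mul hf
  have hh_supp : HasCompactSupport h := hfc.mul_left
  have hh_diff : Differentiable ℝ h := hh_smooth.differentiable (by simp)
  have hDh_cont : Continuous (fun ζ => fderiv ℝ h ζ ω) :=
    (ContinuousLinearMap.apply ℝ ℂ ω).continuous.comp (hh_smooth.continuous_fderiv (by simp))
  have hDh_supp : HasCompactSupport (fun ζ => fderiv ℝ h ζ ω) :=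
    (hh_supp.fderiv ℝ).comp_left (g := fun L : ℂ →L[ℝ] ℂ => L ω) rfl
  -- integrabilities
  have I1 : Integrable (fun ζ => fderiv ℝ h ζ ω * eFun ω ζ) :=
    (hDh_cont.mul (eFun_cont ω)).integrable_of_hasCompactSupport hDh_supp.mul_right
  have I2 : Integrable (fun ζ => h ζ * fderiv ℝ (eFun ω) ζ ω) := by
    have : Continuous (fun ζ => h ζ * fderiv ℝ (eFun ω) ζ ω) := by
      simp only [eFun_fderiv_self]
      exact (hh_smooth.continuous).mul (continuous_const.mul (eFun_cont ω))
    exact this.integrable_of_hasCompactSupport hh_supp.mul_right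
  have I3 : Integrable (fun ζ => h ζ * eFun ω ζ) :=
    ((hh_smooth.continuous).mul (eFun_cont ω)).integrable_of_hasCompactSupport hh_supp.mul_right
  have key := integral_mul_fderiv_eq_neg_fderiv_mul_of_integrable
    (f := h) (g := eFun ω) (v := ω) (μ := volume) I1 I2 I3 (fun x _ => hh_diff x) (fun x _ => eFun_diff ω x)
  -- LHS of key equals c * ∫ h e
  set c : ℂ := -Complex.I * (Complex.normSq ω : ℂ) with hc_def
  have hLHS : (∫ ζ, h ζ * fderiv ℝ (eFun ω) ζ ω) = c * ∫ ζ, h ζ * eFun ω ζ := by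
    rw [← integral_const_mul]
    congr 1; funext ζ; rw [eFun_fderiv_self]; ring
  have hkey2 : c * (∫ ζ, h ζ * eFun ω ζ) = - ∫ ζ, fderiv ℝ h ζ ω * eFun ω ζ := by
    rw [← hLHS]; exact key
  have hcnorm : ‖c‖ = ‖ω‖ ^ 2 := by
    simp [hc_def, map_mul,
      _root_.abs_of_nonneg (Complex.normSq_nonneg ω), Complex.normSq_eq_norm_sq]
  -- pointwise bound on the derivative of h
  have hpt : ∀ ζ, ‖fderiv ℝ h ζ ω‖ ≤ ‖ω‖ * (M * gFun f ζ) := by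
    intro ζ
    have hfm : fderiv ℝ h ζ = k (z, ζ) • fderiv ℝ f ζ
        + f ζ • fderiv ℝ (fun ζ => k (z, ζ)) ζ := by
      exact fderiv_mul ((hk1 ζ).differentiableAt) (hf.differentiable (by simp) ζ)
    have hk1f : fderiv ℝ (fun ζ => k (z, ζ)) ζ ω = fderiv ℝ k (z, ζ) (0, ω) := by
      rw [(hk1 ζ).fderiv]; rfl
    have b1 : ‖fderiv ℝ k (z, ζ) (0, ω)‖ ≤ M * ‖ω‖ := by
      calc ‖fderiv ℝ k (z, ζ) (0, ω)‖ ≤ ‖fderiv ℝ k (z, ζ)‖ * ‖((0 : ℂ), ω)‖ :=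
            (fderiv ℝ k (z, ζ)).le_opNorm _
        _ ≤ M * ‖ω‖ := by
            have : ‖((0 : ℂ), ω)‖ = ‖ω‖ := by simp [Prod.norm_def]
            rw [this]; exact mul_le_mul_of_nonneg_right (hMk' _) (norm_nonneg _)
    calc ‖fderiv ℝ h ζ ω‖
        = ‖k (z, ζ) * fderiv ℝ f ζ ω + f ζ * fderiv ℝ (fun ζ => k (z, ζ)) ζ ω‖ := by
          rw [hfm]; simp [smul_eq_mul]
      _ ≤ ‖k (z, ζ)‖ * ‖fderiv ℝ f ζ ω‖ + ‖f ζ‖ * ‖fderiv ℝ (fun ζ => k (z, ζ)) ζ ω‖ := by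
          refine (norm_add_le _ _).trans ?_
          rw [norm_mul, norm_mul]
      _ ≤ M * (‖ω‖ * (‖fderiv ℝ f ζ 1‖ + ‖fderiv ℝ f ζ Complex.I‖)) + ‖f ζ‖ * (M * ‖ω‖) := by
          gcongr
          · exact hMk _
          · exact fderiv_apply_bound hf ζ ω
          · rw [hk1f]; exact b1
      _ ≤ ‖ω‖ * (M * gFun f ζ) := by
          unfold gFun; nlinarith [norm_nonneg (f ζ), norm_nonneg ω, hM0,
            norm_nonneg (fderiv ℝ f ζ 1), norm_nonneg (fderiv ℝ f ζ Complex.I)]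
  -- integral bound
  have hIntBound : (∫ ζ, ‖fderiv ℝ h ζ ω * eFun ω ζ‖) ≤ ‖ω‖ * (M * ∫ ζ, gFun f ζ) := by
    have : (∫ ζ, ‖fderiv ℝ h ζ ω * eFun ω ζ‖) ≤ ∫ ζ, ‖ω‖ * (M * gFun f ζ) := by
      apply integral_mono I1.norm (((gFun_integrable hf hfc).const_mul M).const_mul ‖ω‖)
      intro ζ
      simp only [norm_mul, eFun_norm, mul_one]
      exact hpt ζ
    simpa [integral_const_mul] using this
  have hgoal_eq : (∫ ζ, k (z, ζ) * (eFun ω ζ * f ζ)) = ∫ ζ, h ζ * eFun ω ζ := by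
    congr 1; funext ζ; simp only [hh_def]; ring
  rw [hgoal_eq]
  have hc_ne : ‖c‖ ≠ 0 := by
    have : ‖ω‖ ≠ 0 := norm_ne_zero_iff.2 hω
    rw [hcnorm]
    positivity
  have hnorm_eq : ‖c‖ * ‖∫ ζ, h ζ * eFun ω ζ‖ = ‖∫ ζ, fderiv ℝ h ζ ω * eFun ω ζ‖ := by
    rw [← norm_mul, hkey2, norm_neg]
  have h1 : ‖∫ ζ, h ζ * eFun ω ζ‖ = ‖c‖⁻¹ * ‖∫ ζ, fderiv ℝ h ζ ω * eFun ω ζ‖ := by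
    rw [← hnorm_eq, ← mul_assoc, inv_mul_cancel₀ hc_ne, one_mul]
  rw [h1, hcnorm]
  have hb := (norm_integral_le_integral_norm (fun ζ => fderiv ℝ h ζ ω * eFun ω ζ)).trans hIntBound
  have hω0 : (0 : ℝ) < ‖ω‖ := norm_pos_iff.2 hω
  calc (‖ω‖ ^ 2)⁻¹ * ‖∫ ζ, fderiv ℝ h ζ ω * eFun ω ζ‖
      ≤ (‖ω‖ ^ 2)⁻¹ * (‖ω‖ * (M * ∫ ζ, gFun f ζ)) := by gcongr
    _ = ‖ω‖⁻¹ * (M * ∫ ζ, gFun f ζ) := by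
        have hne : ‖ω‖ ≠ 0 := ne_of_gt hω0
        rw [pow_two, mul_inv,
          show (‖ω‖⁻¹ * ‖ω‖⁻¹) * (‖ω‖ * (M * ∫ ζ, gFun f ζ))
            = (‖ω‖⁻¹ * ‖ω‖) * (‖ω‖⁻¹ * (M * ∫ ζ, gFun f ζ)) from by ring,
          inv_mul_cancel₀ hne, one_mul]

theorem stmt_10 (Ω : Set ℂ) (hΩo : IsOpen Ω) (hΩb : Bornology.IsBounded Ω)
    (k : ℂ × ℂ → ℂ) (hk : ContDiff ℝ (⊤ : ℕ∞) k) (hkc : HasCompactSupport k)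
    (p q : ℝ) (hp₁ : 4 / 3 < p) (hp₂ : p < 2) (hq₁ : 2 < q) (hq₂ : q < 4)
    (hpq : 1 / p + 1 / q = 1) :
    ∃ C : ℝ, 0 < C ∧ ∀ (ω : ℂ), ω ≠ 0 → ∀ (f : ℂ → ℂ),
      ContDiff ℝ (⊤ : ℕ∞) f → HasCompactSupport f → tsupport f ⊆ Ω →
      eLpNorm
          (kernelOp k (fun z =>
            Complex.exp (-Complex.I * (((z * (starRingEnd ℂ) ω).re : ℝ) : ℂ)) * f z))
          (ENNReal.ofReal q) volume
        ≤ ENNReal.ofReal (C * ‖ω‖⁻¹) * W1pNorm Ω (ENNReal.ofReal p) f := by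
  have hp0 : (0 : ℝ) < p := by linarith
  have hp1 : (1 : ℝ) ≤ p := by linarith
  have hq0 : (0 : ℝ) < q := by linarith
  -- bounds for k and its derivative
  obtain ⟨M₁, hM₁⟩ := hkc.exists_bound_of_continuous hk.continuous
  obtain ⟨M₂, hM₂⟩ := (hkc.fderiv ℝ).exists_bound_of_continuous (hk.continuous_fderiv (by simp))
  set M : ℝ := max M₁ M₂ with hM_def
  have hMk : ∀ x, ‖k x‖ ≤ M := fun x => (hM₁ x).trans (le_max_left _ _)
  have hMk' : ∀ x, ‖fderiv ℝ k x‖ ≤ M := fun x => (hM₂ x).trans (le_max_right _ _)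
  have hM0 : 0 ≤ M := le_trans (norm_nonneg _) (hMk 0)
  -- support in z
  set S : Set ℂ := Prod.fst '' tsupport k with hS_def
  have hS_compact : IsCompact S := hkc.image continuous_fst
  have hS_meas : MeasurableSet S := hS_compact.isClosed.measurableSet
  have hvolS : volume S ≠ ⊤ := hS_compact.measure_lt_top.ne
  -- constants
  set D : ℝ≥0∞ := (volume Ω) ^ (1 - 1 / p) with hD_def
  have hvolΩ : volume Ω ≠ ⊤ := hΩb.measure_lt_top.ne
  have hDfin : D ≠ ⊤ := by
    refine (ENNReal.rpow_lt_top_of_nonneg ?_ hvolΩ).ne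
    have : 1 / p < 3 / 4 := by
      rw [div_lt_div_iff₀ hp0 (by norm_num)]
      linarith
    linarith
  set CE : ℝ≥0∞ := (volume S) ^ q⁻¹ * ENNReal.ofReal M * D with hCE_def
  have hCEfin : CE ≠ ⊤ := by
    apply ENNReal.mul_ne_top
    apply ENNReal.mul_ne_top
    · exact (ENNReal.rpow_lt_top_of_nonneg (by positivity) hvolS).ne
    · exact ENNReal.ofReal_ne_top
    · exact hDfin
  refine ⟨CE.toReal + 1, by positivity, ?_⟩
  intro ω hω f hf hfc hsupp
  have hCE_le : CE ≤ ENNReal.ofReal (CE.toReal + 1) :=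
    le_trans (le_of_eq (ENNReal.ofReal_toReal hCEfin).symm)
      (ENNReal.ofReal_le_ofReal (by linarith))
  set A : ℝ := ∫ ζ, gFun f ζ with hA_def
  have hA0 : 0 ≤ A := integral_nonneg (gFun_nonneg f)
  set G : ℂ → ℂ := kernelOp k (fun z =>
      Complex.exp (-Complex.I * (((z * (starRingEnd ℂ) ω).re : ℝ) : ℂ)) * f z) with hG_def
  have hGbound : ∀ z, ‖G z‖ ≤ ‖ω‖⁻¹ * (M * A) := by
    intro z
    have := pointwise_bound_s10 hk hkc hf hfc hω hMk hMk' z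
    simpa [hG_def, kernelOp, eFun] using this
  have hGzero : ∀ z, z ∉ S → G z = 0 := by
    intro z hz
    have : ∀ ζ : ℂ, k (z, ζ) = 0 := by
      intro ζ
      by_contra hne
      exact hz ⟨(z, ζ), subset_tsupport k hne, rfl⟩
    simp [hG_def, kernelOp, this]
  have hGsupp : Function.support G ⊆ S := by
    intro z hz
    by_contra hzS
    exact hz (hGzero z hzS)
  -- L^q bound
  have step1 : eLpNorm G (ENNReal.ofReal q) volume
      ≤ (volume S) ^ q⁻¹ * ENNReal.ofReal (‖ω‖⁻¹ * (M * A)) := by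
    rw [← Set.indicator_eq_self.2 hGsupp,
      eLpNorm_indicator_eq_eLpNorm_restrict hS_meas]
    have := eLpNorm_le_of_ae_bound (μ := volume.restrict S) (p := ENNReal.ofReal q)
      (f := G) (C := ‖ω‖⁻¹ * (M * A)) (ae_of_all _ hGbound)
    rwa [Measure.restrict_apply_univ, ENNReal.toReal_ofReal hq0.le] at this
  -- relate A to the Sobolev norm
  have hgzeroΩ : ∀ ζ, ζ ∉ Ω → gFun f ζ = 0 := by
    intro ζ hζ
    have h1 : f ζ = 0 := image_eq_zero_of_notMem_tsupport (fun h => hζ (hsupp h))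
    have h2 : fderiv ℝ f ζ = 0 :=
      image_eq_zero_of_notMem_tsupport (fun h => hζ (hsupp (tsupport_fderiv_subset ℝ h)))
    simp [gFun, h1, h2]
  have hA_eq : A = ∫ ζ in Ω, gFun f ζ := by
    rw [hA_def, setIntegral_eq_integral_of_forall_compl_eq_zero hgzeroΩ]
  -- integrability on restrict
  have hint1 : Integrable f (volume.restrict Ω) :=
    (hf.continuous.integrable_of_hasCompactSupport hfc).restrict
  have hfd1c : Continuous (fun ζ => fderiv ℝ f ζ 1) :=
    (ContinuousLinearMap.apply ℝ ℂ 1).continuous.comp (hf.continuous_fderiv (by simp))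
  have hfdIc : Continuous (fun ζ => fderiv ℝ f ζ Complex.I) :=
    (ContinuousLinearMap.apply ℝ ℂ Complex.I).continuous.comp (hf.continuous_fderiv (by simp))
  have hint2 : Integrable (fun ζ => fderiv ℝ f ζ 1) (volume.restrict Ω) :=
    (hfd1c.integrable_of_hasCompactSupport
      ((hfc.fderiv ℝ).comp_left (g := fun L : ℂ →L[ℝ] ℂ => L 1) rfl)).restrict
  have hint3 : Integrable (fun ζ => fderiv ℝ f ζ Complex.I) (volume.restrict Ω) :=
    (hfdIc.integrable_of_hasCompactSupport
      ((hfc.fderiv ℝ).comp_left (g := fun L : ℂ →L[ℝ] ℂ => L Complex.I) rfl)).restrict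
  have hA_split : A = (∫ ζ in Ω, ‖f ζ‖) + (∫ ζ in Ω, ‖fderiv ℝ f ζ 1‖)
      + (∫ ζ in Ω, ‖fderiv ℝ f ζ Complex.I‖) := by
    have e1 : (∫ ζ in Ω, (‖f ζ‖ + ‖fderiv ℝ f ζ 1‖) + ‖fderiv ℝ f ζ Complex.I‖)
        = (∫ ζ in Ω, ‖f ζ‖ + ‖fderiv ℝ f ζ 1‖) + ∫ ζ in Ω, ‖fderiv ℝ f ζ Complex.I‖ :=
      integral_add (hint1.norm.add hint2.norm) hint3.norm
    have e2 : (∫ ζ in Ω, ‖f ζ‖ + ‖fderiv ℝ f ζ 1‖)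
        = (∫ ζ in Ω, ‖f ζ‖) + ∫ ζ in Ω, ‖fderiv ℝ f ζ 1‖ :=
      integral_add hint1.norm hint2.norm
    rw [hA_eq]
    unfold gFun
    rw [e1, e2]
  -- each L¹ norm bounded by L^p norm
  have hone_le : (1 : ℝ≥0∞) ≤ ENNReal.ofReal p := by
    rw [← ENNReal.ofReal_one]
    exact ENNReal.ofReal_le_ofReal hp1
  have hLp : ∀ (u : ℂ → ℂ), Continuous u → Integrable u (volume.restrict Ω) →
      ENNReal.ofReal (∫ ζ in Ω, ‖u ζ‖)
        ≤ eLpNorm u (ENNReal.ofReal p) (volume.restrict Ω) * D := by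
    intro u hu hui
    rw [ofReal_integral_norm_eq_lintegral_enorm hui, ← eLpNorm_one_eq_lintegral_enorm]
    have := eLpNorm_le_eLpNorm_mul_rpow_measure_univ (p := 1) (q := ENNReal.ofReal p)
      hone_le (hu.aestronglyMeasurable (μ := volume.restrict Ω))
    rw [Measure.restrict_apply_univ] at this
    refine this.trans ?_
    gcongr
    rw [hD_def]
    apply le_of_eq
    congr 1
    rw [ENNReal.toReal_one, ENNReal.toReal_ofReal hp0.le]
    norm_num
  have hofA : ENNReal.ofReal A ≤ W1pNorm Ω (ENNReal.ofReal p) f * D := by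
    rw [hA_split, ENNReal.ofReal_add (by positivity) (integral_nonneg (fun _ => norm_nonneg _)),
      ENNReal.ofReal_add (integral_nonneg (fun _ => norm_nonneg _))
        (integral_nonneg (fun _ => norm_nonneg _))]
    have e1 := hLp f hf.continuous hint1
    have e2 := hLp _ hfd1c hint2
    have e3 := hLp _ hfdIc hint3
    calc ENNReal.ofReal (∫ ζ in Ω, ‖f ζ‖) + ENNReal.ofReal (∫ ζ in Ω, ‖fderiv ℝ f ζ 1‖)
          + ENNReal.ofReal (∫ ζ in Ω, ‖fderiv ℝ f ζ Complex.I‖)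
        ≤ eLpNorm f (ENNReal.ofReal p) (volume.restrict Ω) * D
          + eLpNorm (fun z => fderiv ℝ f z 1) (ENNReal.ofReal p) (volume.restrict Ω) * D
          + eLpNorm (fun z => fderiv ℝ f z Complex.I) (ENNReal.ofReal p)
              (volume.restrict Ω) * D := by
          gcongr
      _ = W1pNorm Ω (ENNReal.ofReal p) f * D := by
          rw [W1pNorm, add_mul, add_mul]
  -- assemble
  have step2 : ENNReal.ofReal (‖ω‖⁻¹ * (M * A))
      = ENNReal.ofReal ‖ω‖⁻¹ * (ENNReal.ofReal M * ENNReal.ofReal A) := by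
    rw [ENNReal.ofReal_mul (by positivity), ENNReal.ofReal_mul hM0]
  calc eLpNorm G (ENNReal.ofReal q) volume
      ≤ (volume S) ^ q⁻¹ * ENNReal.ofReal (‖ω‖⁻¹ * (M * A)) := step1
    _ = (volume S) ^ q⁻¹ * (ENNReal.ofReal ‖ω‖⁻¹ * (ENNReal.ofReal M * ENNReal.ofReal A)) := by
        rw [step2]
    _ ≤ (volume S) ^ q⁻¹ * (ENNReal.ofReal ‖ω‖⁻¹
          * (ENNReal.ofReal M * (W1pNorm Ω (ENNReal.ofReal p) f * D))) := by
        gcongr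
    _ = (CE * ENNReal.ofReal ‖ω‖⁻¹) * W1pNorm Ω (ENNReal.ofReal p) f := by
        rw [hCE_def]; ring
    _ ≤ (ENNReal.ofReal (CE.toReal + 1) * ENNReal.ofReal ‖ω‖⁻¹)
          * W1pNorm Ω (ENNReal.ofReal p) f := by
        gcongr
    _ = ENNReal.ofReal ((CE.toReal + 1) * ‖ω‖⁻¹)
          * W1pNorm Ω (ENNReal.ofReal p) f := by
        rw [ENNReal.ofReal_mul (by positivity)]
end
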